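/- arXiv:2010.07362 — 7 statements merged into one kernel-verified Lean document; each statement's English description precedes it below -/
import Mathlib

section
/- Let k → B be a ℚ-algebra embedding of a quadratic field k into a quaternion algebra B over ℚ. Then there exists an element j ∈ B^× such that a·j = j·ā for all a ∈ k (where ā denotes the image of a under the nontrivial automorphism of k); such an element j is unique up to multiplication by k^×; and any such j satisfies j² ∈ ℚ^× and yields a direct sum decomposition B = k ⊕ k·j of ℚ-vector spaces. -/
/-!
Choose `β ∈ k` with `σ β = -β`. Then `β²` is rational, hence central in `B`, so every commutator
`j = ι β x - x ι β` anticommutes with `ι β`, which (as `β` generates `k`) means `a j = j ā` for all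
`a ∈ k`; since `ι β` is not central, some such `j` is nonzero.

For any nonzero such `j`, commuting `ι u + ι v j` with `ι a` for some `a ≠ ā` kills `ι v j (ā - a)`,
so the sum `k + k j` is direct, and it is all of `B` by counting dimensions. Everything else is read
off coordinates: `j²` commutes with `k`, so lies in `k`, and commutes with `j`, so is `σ`-fixed,
hence rational; `j² ≠ 0`, since otherwise `j B j = 0`, impossible in a simple ring; and for two
such elements, `j' - c j` lies in `k` for a suitable `c`, where no nonzero element is semilinear.
-/

open Module

theorem eq_one_or_eq_of_card_eq_two {G : Type*} [Group G] (hG : Nat.card G = 2) {σ : G}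
    (hσ : σ ≠ 1) (τ : G) : τ = 1 ∨ τ = σ := by
  rw [Nat.card_eq_two_iff' 1] at hG
  exact or_iff_not_imp_left.2 fun hτ => hG.unique hτ hσ

theorem IsSimpleRing.eq_zero_of_forall_mul_mul_eq_zero {R : Type*} [Ring R] [IsSimpleRing R]
    {x : R} (h : ∀ y, x * y * x = 0) : x = 0 := by
  by_contra hx
  -- the two-sided ideal of all `z` with `x R z R = 0` contains `x`, hence `1`
  let I : TwoSidedIdeal R := TwoSidedIdeal.mk' {z | ∀ a b, x * a * z * b = 0}
    (fun a b => by rw [mul_zero, zero_mul])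
    (fun hz hw a b => by rw [mul_add, add_mul, hz, hw, add_zero])
    (fun hz a b => by rw [mul_neg, neg_mul, hz, neg_zero])
    (fun {c _} hz a b => by simpa only [mul_assoc] using hz (a * c) b)
    (fun {_ c} hz a b => by simpa only [mul_assoc] using hz a (c * b))
  have hxI : x ∈ I := (TwoSidedIdeal.mem_mk' _ _ _ _ _ _ _).2 fun a b => by rw [h, zero_mul]
  have h1 := (TwoSidedIdeal.mem_mk' _ _ _ _ _ _ _).1 (IsSimpleRing.one_mem_of_ne_zero_mem I hx hxI)
  exact hx (by simpa using h1 1 1)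

section QuadraticExtension

variable {F k : Type*} [Field F] [Field k] [Algebra F k] [Algebra.IsQuadraticExtension F k]
  [Algebra.IsSeparable F k] {σ : k ≃ₐ[F] k}

theorem AlgEquiv.eq_refl_or_eq_of_ne_refl (hσ : σ ≠ AlgEquiv.refl) (τ : k ≃ₐ[F] k) :
    τ = AlgEquiv.refl ∨ τ = σ :=
  eq_one_or_eq_of_card_eq_two
    ((IsGalois.card_aut_eq_finrank F k).trans (Algebra.IsQuadraticExtension.finrank_eq_two F k))
    hσ τ

theorem AlgEquiv.apply_apply_of_ne_refl (hσ : σ ≠ AlgEquiv.refl) (a : k) : σ (σ a) = a := by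
  rcases σ.eq_refl_or_eq_of_ne_refl hσ (σ * σ) with h | h
  · exact DFunLike.congr_fun h a
  · exact absurd (mul_eq_left.1 h) hσ

theorem AlgEquiv.mem_range_algebraMap_of_apply_eq_self (hσ : σ ≠ AlgEquiv.refl) {c : k}
    (hc : σ c = c) : c ∈ Set.range (algebraMap F k) := by
  rw [← IntermediateField.mem_bot, IsGalois.mem_bot_iff_fixed]
  intro τ
  rcases σ.eq_refl_or_eq_of_ne_refl hσ τ with rfl | rfl
  · rfl
  · exact hc

theorem AlgEquiv.exists_adjoin_eq_top_apply_eq_neg [NeZero (2 : F)] (hσ : σ ≠ AlgEquiv.refl) :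
    ∃ β : k, Algebra.adjoin F {β} = ⊤ ∧ β ∉ Set.range (algebraMap F k) ∧ σ β = -β ∧
      β ^ 2 ∈ Set.range (algebraMap F k) := by
  obtain ⟨α, hα⟩ : ∃ α, σ α ≠ α := not_forall.1 fun h => hσ (AlgEquiv.ext h)
  have hσβ : σ (α - σ α) = -(α - σ α) := by
    rw [map_sub, σ.apply_apply_of_ne_refl hσ, neg_sub]
  have hβ : α - σ α ∉ Set.range (algebraMap F k) := by
    rintro ⟨q, hq⟩
    have h2 : (2 : k) ≠ 0 := by
      rw [← map_ofNat (algebraMap F k) 2]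
      exact (map_ne_zero _).2 two_ne_zero
    have hfix : σ (α - σ α) = α - σ α := by rw [← hq, AlgEquiv.commutes]
    have : (2 : k) * (α - σ α) = 0 := by linear_combination hσβ - hfix
    exact hα (sub_eq_zero.1 ((mul_eq_zero.1 this).resolve_left h2)).symm
  refine ⟨α - σ α, ?_, hβ, hσβ, σ.mem_range_algebraMap_of_apply_eq_self hσ ?_⟩
  · have := Subalgebra.isSimpleOrder_of_finrank_prime F k
      (Algebra.IsQuadraticExtension.finrank_eq_two F k ▸ Nat.prime_two)
    refine (eq_bot_or_eq_top _).resolve_left fun hbot => hβ ?_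
    exact Algebra.mem_bot.1 (hbot ▸ Algebra.subset_adjoin rfl)
  · rw [map_pow, hσβ, neg_sq]

end QuadraticExtension

section Intertwiner

variable {F k B : Type*} [Field F] [Field k] [Ring B] [Algebra F k] [Algebra F B]

def IsIntertwiner (ι : k →ₐ[F] B) (σ : k ≃ₐ[F] k) (j : B) : Prop :=
  ∀ a : k, ι a * j = j * ι (σ a)

def coprodMulRight (ι : k →ₐ[F] B) (j : B) : k × k →ₗ[F] B :=
  ι.toLinearMap.coprod (LinearMap.mulRight F j ∘ₗ ι.toLinearMap)

variable {ι : k →ₐ[F] B} {σ : k ≃ₐ[F] k} {j : B}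

theorem coprodMulRight_apply (u v : k) : coprodMulRight ι j (u, v) = ι u + ι v * j := rfl

theorem isIntertwiner_of_adjoin_eq_top {β : k} (hβ : Algebra.adjoin F {β} = ⊤)
    (h : ι β * j = j * ι (σ β)) : IsIntertwiner ι σ j := by
  intro a
  induction (hβ ▸ Algebra.mem_top : a ∈ Algebra.adjoin F {β}) using Algebra.adjoin_induction with
  | mem x hx => rwa [Set.mem_singleton_iff.1 hx]
  | algebraMap r => rw [AlgHom.commutes, AlgEquiv.commutes, AlgHom.commutes, Algebra.commutes]
  | add x y _ _ hx hy => rw [map_add, map_add, map_add, add_mul, mul_add, hx, hy]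
  | mul x y _ _ hx hy => rw [map_mul, map_mul, map_mul, mul_assoc, hy, ← mul_assoc, hx, mul_assoc]

theorem exists_isIntertwiner_ne_zero [Nontrivial B] [Algebra.IsCentral F B] {β : k}
    (hgen : Algebra.adjoin F {β} = ⊤) (hβ : β ∉ Set.range (algebraMap F k)) (hσβ : σ β = -β)
    (hsq : β ^ 2 ∈ Set.range (algebraMap F k)) : ∃ j : B, j ≠ 0 ∧ IsIntertwiner ι σ j := by
  obtain ⟨x, hx⟩ : ∃ x : B, ι β * x ≠ x * ι β := by
    by_contra! h
    have hcen : ι β ∈ Subalgebra.center F B := Subalgebra.mem_center_iff.2 fun b => (h b).symm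
    obtain ⟨q, hq⟩ := Algebra.mem_bot.1 (Algebra.IsCentral.out hcen)
    have hι : Function.Injective ι := ι.toRingHom.injective
    exact hβ ⟨q, hι (by rw [← hq, AlgHom.commutes])⟩
  obtain ⟨d, hd⟩ := hsq
  have hβ2 : Commute (ι β * ι β) x := by
    rw [← map_mul, ← sq, ← hd, AlgHom.commutes]
    exact Algebra.commute_algebraMap_left d x
  refine ⟨ι β * x - x * ι β, sub_ne_zero.2 hx, isIntertwiner_of_adjoin_eq_top hgen ?_⟩
  rw [hσβ, map_neg, mul_neg, mul_sub, sub_mul, ← mul_assoc, hβ2.eq, mul_assoc x, mul_assoc]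
  abel

theorem IsIntertwiner.mul_left (hj : IsIntertwiner ι σ j) (c : k) :
    IsIntertwiner ι σ (ι c * j) := fun a => by
  rw [← mul_assoc, ← map_mul, mul_comm, map_mul, mul_assoc, hj, mul_assoc]

theorem IsIntertwiner.sub {j' : B} (hj : IsIntertwiner ι σ j) (hj' : IsIntertwiner ι σ j') :
    IsIntertwiner ι σ (j - j') := fun a => by
  rw [mul_sub, sub_mul, hj, hj']

theorem IsIntertwiner.commute_mul_self (hσσ : ∀ a, σ (σ a) = a) (hj : IsIntertwiner ι σ j)
    (a : k) : Commute (ι a) (j * j) := by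
  rw [commute_iff_eq, ← mul_assoc, hj, mul_assoc, hj, hσσ, mul_assoc]

theorem eq_zero_of_isIntertwiner_apply [Nontrivial B] (hσ : σ ≠ AlgEquiv.refl) {u : k}
    (hu : IsIntertwiner ι σ (ι u)) : u = 0 := by
  obtain ⟨a, ha⟩ : ∃ a, σ a ≠ a := not_forall.1 fun h => hσ (AlgEquiv.ext h)
  have h : a * u = u * σ a := ι.toRingHom.injective (by rw [map_mul, map_mul]; exact hu a)
  have : u * (a - σ a) = 0 := by linear_combination h
  exact (mul_eq_zero.1 this).resolve_right (sub_ne_zero.2 ha.symm)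

theorem IsIntertwiner.eq_zero_of_forall_commute [Nontrivial B] (hσ : σ ≠ AlgEquiv.refl)
    (hj : IsIntertwiner ι σ j) (hj0 : j ≠ 0) {u v : k}
    (h : ∀ a, Commute (ι a) (ι u + ι v * j)) : v = 0 := by
  obtain ⟨a, ha⟩ : ∃ a, σ a ≠ a := not_forall.1 fun h => hσ (AlgEquiv.ext h)
  have hunit {c : k} (hc : c ≠ 0) : IsUnit (ι c) := hc.isUnit.map ι
  have key : ι v * j * ι (σ a - a) = 0 := by
    have hu : ι a * ι u = ι u * ι a := by rw [← map_mul, mul_comm, map_mul]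
    have hv : ι a * (ι v * j) = ι v * j * ι (σ a) := by
      rw [← mul_assoc, ← map_mul, mul_comm, map_mul, mul_assoc, hj, mul_assoc]
    have := (h a).eq
    rw [mul_add, add_mul, hu, hv] at this
    rw [map_sub, mul_sub, add_left_cancel this, sub_self]
  by_contra hv
  exact hj0 ((hunit hv).mul_right_eq_zero.1
    ((hunit (sub_ne_zero.2 ha)).mul_left_eq_zero.1 key))

theorem IsIntertwiner.injective_coprodMulRight [Nontrivial B] (hσ : σ ≠ AlgEquiv.refl)
    (hj : IsIntertwiner ι σ j) (hj0 : j ≠ 0) : Function.Injective (coprodMulRight ι j) := by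
  refine (injective_iff_map_eq_zero _).2 fun ⟨u, v⟩ h => ?_
  rw [coprodMulRight_apply] at h
  have hv : v = 0 := hj.eq_zero_of_forall_commute hσ hj0 fun a => h ▸ Commute.zero_right _
  rw [hv, map_zero, zero_mul, add_zero, map_eq_zero_iff ι ι.toRingHom.injective] at h
  rw [h, hv, Prod.mk_zero_zero]

theorem IsIntertwiner.bijective_coprodMulRight [Nontrivial B] [FiniteDimensional F k]
    [FiniteDimensional F B] (hB : finrank F B = 2 * finrank F k) (hσ : σ ≠ AlgEquiv.refl)
    (hj : IsIntertwiner ι σ j) (hj0 : j ≠ 0) : Function.Bijective (coprodMulRight ι j) := by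
  have hinj := hj.injective_coprodMulRight hσ hj0
  refine ⟨hinj, (LinearMap.injective_iff_surjective_of_finrank_eq_finrank ?_).1 hinj⟩
  rw [finrank_prod, hB, two_mul]

theorem IsIntertwiner.exists_eq_mul [Nontrivial B] [FiniteDimensional F k]
    [FiniteDimensional F B] (hB : finrank F B = 2 * finrank F k) (hσ : σ ≠ AlgEquiv.refl)
    (hj : IsIntertwiner ι σ j) (hj0 : j ≠ 0) {j' : B} (hj' : IsIntertwiner ι σ j')
    (hj'0 : j' ≠ 0) : ∃ c : kˣ, j' = ι c * j := by
  obtain ⟨⟨u, v⟩, huv⟩ := (hj.bijective_coprodMulRight hB hσ hj0).2 j'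
  rw [coprodMulRight_apply] at huv
  have hu : u = 0 := eq_zero_of_isIntertwiner_apply hσ (by
    simpa only [← huv, add_sub_cancel_right] using hj'.sub (hj.mul_left v))
  rw [hu, map_zero, zero_add] at huv
  have hv : v ≠ 0 := by
    rintro rfl
    exact hj'0 (by rw [← huv, map_zero, zero_mul])
  exact ⟨Units.mk0 v hv, huv.symm⟩

theorem IsIntertwiner.exists_mul_self_eq [Nontrivial B] [FiniteDimensional F k]
    [FiniteDimensional F B] (hB : finrank F B = 2 * finrank F k) (hσ : σ ≠ AlgEquiv.refl)
    (hσσ : ∀ a, σ (σ a) = a) (hj : IsIntertwiner ι σ j) (hj0 : j ≠ 0) :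
    ∃ c : k, σ c = c ∧ j * j = ι c := by
  obtain ⟨⟨u, v⟩, huv⟩ := (hj.bijective_coprodMulRight hB hσ hj0).2 (j * j)
  rw [coprodMulRight_apply] at huv
  have hv : v = 0 :=
    hj.eq_zero_of_forall_commute hσ hj0 fun a => huv ▸ hj.commute_mul_self hσσ a
  rw [hv, map_zero, zero_mul, add_zero] at huv
  refine ⟨u, ?_, huv.symm⟩
  by_contra hu
  have : j * ι (σ u - u) = 0 := by
    rw [map_sub, mul_sub, ← hj u, huv, mul_assoc, sub_self]
  exact hj0 (((sub_ne_zero.2 hu).isUnit.map ι).mul_left_eq_zero.1 this)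

theorem IsIntertwiner.mul_self_ne_zero [IsSimpleRing B] [FiniteDimensional F k]
    [FiniteDimensional F B] (hB : finrank F B = 2 * finrank F k) (hσ : σ ≠ AlgEquiv.refl)
    (hj : IsIntertwiner ι σ j) (hj0 : j ≠ 0) : j * j ≠ 0 := by
  intro hjj
  refine hj0 (IsSimpleRing.eq_zero_of_forall_mul_mul_eq_zero fun y => ?_)
  obtain ⟨⟨u, v⟩, rfl⟩ := (hj.bijective_coprodMulRight hB hσ hj0).2 y
  have hu : j * ι u = ι (σ.symm u) * j := by rw [hj, σ.apply_symm_apply]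
  rw [coprodMulRight_apply, mul_add, add_mul, hu, mul_assoc, mul_assoc, mul_assoc, hjj,
    mul_zero, mul_zero, mul_zero, add_zero]

end Intertwiner

section QuaternionAlgebra

variable {F k B : Type*} [Field F] [Field k] [Ring B] [Algebra F k] [Algebra F B]
  [Algebra.IsQuadraticExtension F k] [Algebra.IsSeparable F k] [IsSimpleRing B]
  [FiniteDimensional F B] {ι : k →ₐ[F] B} {σ : k ≃ₐ[F] k} {j : B}

theorem IsIntertwiner.exists_sq_eq_algebraMap (hB : finrank F B = 4) (hσ : σ ≠ AlgEquiv.refl)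
    (hj : IsIntertwiner ι σ j) (hj0 : j ≠ 0) : ∃ q : F, q ≠ 0 ∧ j ^ 2 = algebraMap F B q := by
  have hB' : finrank F B = 2 * finrank F k := by
    rw [hB, Algebra.IsQuadraticExtension.finrank_eq_two]
  obtain ⟨c, hc, hjj⟩ := hj.exists_mul_self_eq hB' hσ (σ.apply_apply_of_ne_refl hσ) hj0
  obtain ⟨q, rfl⟩ := σ.mem_range_algebraMap_of_apply_eq_self hσ hc
  refine ⟨q, ?_, by rw [sq, hjj, AlgHom.commutes]⟩
  rintro rfl
  exact hj.mul_self_ne_zero hB' hσ hj0 (by rw [hjj, map_zero, map_zero])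

theorem IsIntertwiner.isUnit (hB : finrank F B = 4) (hσ : σ ≠ AlgEquiv.refl)
    (hj : IsIntertwiner ι σ j) (hj0 : j ≠ 0) : IsUnit j := by
  obtain ⟨q, hq, hsq⟩ := hj.exists_sq_eq_algebraMap hB hσ hj0
  have h : j * (q⁻¹ • j) = 1 := by
    rw [mul_smul_comm, ← sq, hsq, Algebra.smul_def, ← map_mul, inv_mul_cancel₀ hq, map_one]
  exact isUnit_iff_exists.2 ⟨q⁻¹ • j, h, by rwa [smul_mul_assoc, ← mul_smul_comm]⟩

end QuaternionAlgebra

theorem statement0_general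
    (k : Type) [Field k] [Algebra ℚ k] (hk2 : Module.finrank ℚ k = 2)
    (σ : k ≃ₐ[ℚ] k) (hσ : σ ≠ AlgEquiv.refl)
    (B : Type) [Ring B] [Algebra ℚ B]
    (hB4 : Module.finrank ℚ B = 4)
    [Algebra.IsCentral ℚ B] [IsSimpleRing B]
    (ι : k →ₐ[ℚ] B) :
    (∃ j : Bˣ, ∀ a : k, ι a * (j : B) = (j : B) * ι (σ a)) ∧
    (∀ j j' : Bˣ, (∀ a : k, ι a * (j : B) = (j : B) * ι (σ a)) →
      (∀ a : k, ι a * (j' : B) = (j' : B) * ι (σ a)) →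
      ∃ c : kˣ, (j' : B) = ι (c : k) * (j : B)) ∧
    (∀ j : Bˣ, (∀ a : k, ι a * (j : B) = (j : B) * ι (σ a)) →
      (∃ q : ℚ, q ≠ 0 ∧ (j : B) ^ 2 = algebraMap ℚ B q) ∧
      Function.Bijective (fun p : k × k => ι p.1 + ι p.2 * (j : B))) := by
  have : Algebra.IsQuadraticExtension ℚ k := { finrank_eq_two' := hk2 }
  have : FiniteDimensional ℚ B := .of_finrank_pos (by rw [hB4]; norm_num)
  have hB : Module.finrank ℚ B = 2 * Module.finrank ℚ k := by rw [hB4, hk2]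
  obtain ⟨β, hgen, hβ, hσβ, hsq⟩ := σ.exists_adjoin_eq_top_apply_eq_neg hσ
  obtain ⟨j₀, hj₀0, hj₀⟩ := exists_isIntertwiner_ne_zero (ι := ι) hgen hβ hσβ hsq
  refine ⟨⟨(hj₀.isUnit hB4 hσ hj₀0).unit, hj₀⟩, ?_, ?_⟩
  · intro j j' hj hj'
    exact IsIntertwiner.exists_eq_mul hB hσ hj j.ne_zero hj' j'.ne_zero
  · intro j hj
    exact ⟨IsIntertwiner.exists_sq_eq_algebraMap hB4 hσ hj j.ne_zero,
      IsIntertwiner.bijective_coprodMulRight hB hσ hj j.ne_zero⟩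

theorem statement0
    (k : Type) [Field k] [Algebra ℚ k] (hk2 : Module.finrank ℚ k = 2)
    (σ : k ≃ₐ[ℚ] k) (hσ : σ ≠ AlgEquiv.refl)
    (B : Type) [Ring B] [Algebra ℚ B]
    (hB4 : Module.finrank ℚ B = 4)
    [Algebra.IsCentral ℚ B] [IsSimpleRing B]
    (ι : k →ₐ[ℚ] B) (hι : Function.Injective ι) :
    (∃ j : Bˣ, ∀ a : k, ι a * (j : B) = (j : B) * ι (σ a)) ∧
    (∀ j j' : Bˣ, (∀ a : k, ι a * (j : B) = (j : B) * ι (σ a)) →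
      (∀ a : k, ι a * (j' : B) = (j' : B) * ι (σ a)) →
      ∃ c : kˣ, (j' : B) = ι (c : k) * (j : B)) ∧
    (∀ j : Bˣ, (∀ a : k, ι a * (j : B) = (j : B) * ι (σ a)) →
      (∃ q : ℚ, q ≠ 0 ∧ (j : B) ^ 2 = algebraMap ℚ B q) ∧
      Function.Bijective (fun p : k × k => ι p.1 + ι p.2 * (j : B))) :=
  statement0_general k hk2 σ hσ B hB4 ι
end

section
/- Up to ℚ^×-scaling, λ(x,y) = Trd(δ⁻¹ x ȳ) is the unique symplectic form on B compatible with the involution †: if λ' : B × B → ℚ is any alternating ℚ-bilinear form satisfying λ'(b·x, y) = λ'(x, b†·y) for all b, x, y ∈ B, then λ' = c·λ for some c ∈ ℚ. -/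
/-!
Write `u = ι δ` and `b† = u b̄ u⁻¹`. If `λ'` is alternating and compatible with `†`, then
`λ'(x, y) = λ'(1, x† y)`, and polarising `λ'(1, w† w) = λ'(w, w) = 0` shows that `λ'(1, ·)` is odd
under `†`. Since `ū = -u`, an element `w` with `w† = -w` has `u⁻¹ w` fixed by the main involution,
hence rational, so the `†`-skew elements form the line `ℚ u`. Therefore
`λ'(1, w) = ½ λ'(1, w - w†)` is a multiple of `λ'(1, u)` depending only on `w`, and any two such
forms are proportional; `λ` is one of them, with `λ(1, u) = -2 ≠ 0`.
-/

open scoped TensorProduct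

theorem AlgEquiv.apply_eq_neg_of_sq_eq_algebraMap {K k : Type*} [Field K] [Field k] [Algebra K k]
    (hk : Module.finrank K k = 2) {σ : k ≃ₐ[K] k} (hσ : σ ≠ AlgEquiv.refl) {δ : k}
    (hδ : δ ∉ Set.range (algebraMap K k)) {d : K} (hδd : δ ^ 2 = algebraMap K k d) :
    σ δ = -δ := by
  have hsq : σ δ * σ δ = δ * δ := by
    rw [← sq, ← sq, ← map_pow, hδd, AlgEquiv.commutes]
  refine (mul_self_eq_mul_self_iff.mp hsq).resolve_left fun hfix ↦ hσ ?_
  have hli : LinearIndependent K ![1, δ] :=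
    (LinearIndependent.pair_iff' one_ne_zero).mpr fun a ha ↦
      hδ ⟨a, by rw [← ha, Algebra.smul_def, mul_one]⟩
  have hid : σ.toLinearMap = LinearMap.id :=
    LinearMap.ext_on_range (hli.span_eq_top_of_card_eq_finrank (by simp [hk])) fun i ↦ by
      fin_cases i <;> simp [hfix]
  exact AlgEquiv.ext (LinearMap.congr_fun hid)

section

variable {K B : Type*} [Field K] [Ring B] [Algebra K B]

structure IsStandardInvolution (conj : B →ₗ[K] B) (trd : B → K) : Prop where
  conj_mul : ∀ x y, conj (x * y) = conj y * conj x
  conj_conj : ∀ x, conj (conj x) = x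
  conj_one : conj 1 = 1
  add_conj : ∀ x, x + conj x = algebraMap K B (trd x)

def dagger (conj : B →ₗ[K] B) (u : Bˣ) : B →ₗ[K] B :=
  LinearMap.mulLeft K (u : B) ∘ₗ LinearMap.mulRight K (↑u⁻¹ : B) ∘ₗ conj

theorem dagger_apply (conj : B →ₗ[K] B) (u : Bˣ) (b : B) :
    dagger conj u b = u * conj b * ↑u⁻¹ := by
  simp [dagger, mul_assoc]

namespace IsStandardInvolution

variable {conj : B →ₗ[K] B} {trd : B → K}

theorem conj_eq (h : IsStandardInvolution conj trd) (x : B) : conj x = trd x • 1 - x := by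
  rw [Algebra.smul_def, mul_one, ← h.add_conj, add_sub_cancel_left]

theorem algebraMap_trace_mul (h : IsStandardInvolution conj trd) (x y : B) :
    algebraMap K B (trd (x * y)) = x * y + y * x - trd y • x - trd x • y + (trd y * trd x) • 1 := by
  rw [← h.add_conj, h.conj_mul, h.conj_eq x, h.conj_eq y]
  simp only [sub_mul, mul_sub, smul_mul_assoc, mul_smul_comm, one_mul, mul_one]
  module

theorem conj_inv (h : IsStandardInvolution conj trd) {u : Bˣ} (hu : conj u = -u) :
    conj ↑u⁻¹ = -↑u⁻¹ :=
  calc conj ↑u⁻¹ = -(conj ↑u⁻¹ * conj u) * ↑u⁻¹ := by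
        rw [hu, mul_neg, neg_neg, mul_assoc, u.mul_inv, mul_one]
    _ = -↑u⁻¹ := by rw [← h.conj_mul, u.mul_inv, h.conj_one, neg_one_mul]

theorem conj_dagger (h : IsStandardInvolution conj trd) {u : Bˣ} (hu : conj u = -u) (b : B) :
    conj (dagger conj u b) = ↑u⁻¹ * b * u := by
  rw [dagger_apply, h.conj_mul, h.conj_mul, h.conj_conj, h.conj_inv hu, hu]
  simp only [neg_mul, mul_neg, neg_neg, mul_assoc]

theorem dagger_one (h : IsStandardInvolution conj trd) (u : Bˣ) : dagger conj u 1 = 1 := by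
  rw [dagger_apply, h.conj_one, mul_one, u.mul_inv]

theorem dagger_dagger (h : IsStandardInvolution conj trd) {u : Bˣ} (hu : conj u = -u) (b : B) :
    dagger conj u (dagger conj u b) = b := by
  rw [dagger_apply _ _ (dagger conj u b), h.conj_dagger hu]
  simp [mul_assoc]

theorem two_smul_eq_of_dagger_eq_neg (h : IsStandardInvolution conj trd) {u : Bˣ}
    (hu : conj u = -u) {w : B} (hw : dagger conj u w = -w) :
    (2 : K) • w = trd (↑u⁻¹ * w) • (u : B) := by
  have hfix : conj (↑u⁻¹ * w) = ↑u⁻¹ * w := by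
    have := congrArg ((↑u⁻¹ : B) * ·) hw
    simp only [dagger_apply, ← mul_assoc, u.inv_mul, one_mul, mul_neg] at this
    rw [h.conj_mul, h.conj_inv hu, mul_neg, this, neg_neg]
  calc (2 : K) • w = (u : B) * ((2 : K) • (↑u⁻¹ * w)) := by
        rw [mul_smul_comm, ← mul_assoc, u.mul_inv, one_mul]
    _ = (u : B) * (↑u⁻¹ * w + conj (↑u⁻¹ * w)) := by rw [hfix, two_smul]
    _ = trd (↑u⁻¹ * w) • (u : B) := by
        rw [h.add_conj, Algebra.algebraMap_eq_smul_one, mul_smul_comm, mul_one]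

variable [Nontrivial B]

theorem trace_add (h : IsStandardInvolution conj trd) (x y : B) :
    trd (x + y) = trd x + trd y :=
  (algebraMap K B).injective <| by
    rw [map_add, ← h.add_conj, ← h.add_conj, ← h.add_conj, map_add]; abel

theorem trace_smul (h : IsStandardInvolution conj trd) (c : K) (x : B) :
    trd (c • x) = c * trd x :=
  (algebraMap K B).injective <| by
    rw [← h.add_conj, map_smul, ← smul_add, h.add_conj, Algebra.smul_def, map_mul]

theorem trace_neg (h : IsStandardInvolution conj trd) (x : B) : trd (-x) = -trd x := by
  simpa using h.trace_smul (-1) x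

theorem trace_one (h : IsStandardInvolution conj trd) : trd 1 = 2 :=
  (algebraMap K B).injective <| by rw [← h.add_conj, h.conj_one, map_ofNat, one_add_one_eq_two]

theorem trace_conj (h : IsStandardInvolution conj trd) (x : B) : trd (conj x) = trd x :=
  (algebraMap K B).injective <| by rw [← h.add_conj, ← h.add_conj, h.conj_conj, add_comm]

theorem trace_mul_comm (h : IsStandardInvolution conj trd) (x y : B) :
    trd (x * y) = trd (y * x) :=
  (algebraMap K B).injective <| by
    rw [h.algebraMap_trace_mul, h.algebraMap_trace_mul, mul_comm (trd y)]; abel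

end IsStandardInvolution

structure IsCompatibleAltForm (τ : B →ₗ[K] B) (L : B → B → K) : Prop where
  add_right : ∀ x y y', L x (y + y') = L x y + L x y'
  smul_right : ∀ (c : K) x y, L x (c • y) = c * L x y
  apply_self : ∀ x, L x x = 0
  mul_left : ∀ b x y, L (b * x) y = L x (τ b * y)

namespace IsCompatibleAltForm

variable {τ : B →ₗ[K] B} {L : B → B → K}

theorem sub_right (hL : IsCompatibleAltForm τ L) (x y y' : B) :
    L x (y - y') = L x y - L x y' := by
  rw [sub_eq_add_neg, ← neg_one_smul K y', hL.add_right, hL.smul_right]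
  ring

theorem apply_eq_apply_one (hL : IsCompatibleAltForm τ L) (x y : B) : L x y = L 1 (τ x * y) := by
  simpa using hL.mul_left x 1 y

theorem apply_one_map (hL : IsCompatibleAltForm τ L) (hτ : τ 1 = 1) (w : B) :
    L 1 (τ w) = -L 1 w := by
  have hvanish : ∀ v, L 1 (τ v * v) = 0 := fun v ↦
    (hL.apply_eq_apply_one v v).symm.trans (hL.apply_self v)
  have hpolar := hvanish (1 + w)
  rw [map_add, hτ, add_mul, mul_add, mul_add, one_mul, mul_one, one_mul, hL.add_right,
    hL.add_right, hL.add_right, hL.apply_self, hvanish] at hpolar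
  linear_combination hpolar

variable {conj : B →ₗ[K] B} {trd : B → K} {u : Bˣ}

theorem four_mul_apply_one (hL : IsCompatibleAltForm (dagger conj u) L)
    (h : IsStandardInvolution conj trd) (hu : conj u = -u) (w : B) :
    4 * L 1 w = trd (↑u⁻¹ * (w - dagger conj u w)) * L 1 u := by
  have hskew : dagger conj u (w - dagger conj u w) = -(w - dagger conj u w) := by
    rw [map_sub, h.dagger_dagger hu, neg_sub]
  have := congrArg (L 1) (h.two_smul_eq_of_dagger_eq_neg hu hskew)
  rw [hL.smul_right, hL.smul_right, hL.sub_right, hL.apply_one_map (h.dagger_one u)] at this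
  linear_combination this

theorem mul_apply_eq_mul_apply [NeZero (2 : K)] {M : B → B → K}
    (hL : IsCompatibleAltForm (dagger conj u) L) (hM : IsCompatibleAltForm (dagger conj u) M)
    (h : IsStandardInvolution conj trd) (hu : conj u = -u) (x y : B) :
    L 1 u * M x y = M 1 u * L x y := by
  have h4 : (4 : K) ≠ 0 := by
    rw [show (4 : K) = 2 * 2 by norm_num]
    exact mul_ne_zero two_ne_zero two_ne_zero
  refine mul_left_cancel₀ h4 ?_
  rw [hL.apply_eq_apply_one x y, hM.apply_eq_apply_one x y]
  linear_combination L 1 u * hM.four_mul_apply_one h hu (dagger conj u x * y) -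
    M 1 u * hL.four_mul_apply_one h hu (dagger conj u x * y)

end IsCompatibleAltForm

theorem IsStandardInvolution.isCompatibleAltForm_trace [Nontrivial B] [NeZero (2 : K)]
    {conj : B →ₗ[K] B} {trd : B → K} (h : IsStandardInvolution conj trd) {u : Bˣ}
    (hu : conj u = -u) :
    IsCompatibleAltForm (dagger conj u) fun x y ↦ trd (↑u⁻¹ * x * conj y) where
  add_right x y y' := by simp only [map_add, mul_add, h.trace_add]
  smul_right c x y := by simp only [map_smul, mul_smul_comm, h.trace_smul]
  apply_self x := by
    have hneg : trd (↑u⁻¹ * x * conj x) = -trd (↑u⁻¹ * x * conj x) :=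
      calc _ = trd (conj (↑u⁻¹ * x * conj x)) := (h.trace_conj _).symm
        _ = -trd (x * conj x * ↑u⁻¹) := by
          rw [h.conj_mul, h.conj_mul, h.conj_conj, h.conj_inv hu, ← h.trace_neg]
          simp only [mul_neg, mul_assoc]
        _ = _ := by rw [h.trace_mul_comm, ← mul_assoc]
    have htwice : (2 : K) * trd (↑u⁻¹ * x * conj x) = 0 := by linear_combination hneg
    exact (mul_eq_zero.mp htwice).resolve_left two_ne_zero
  mul_left b x y := by
    rw [h.conj_mul, h.conj_dagger hu,
      show ↑u⁻¹ * (b * x) * conj y = (↑u⁻¹ * b) * (x * conj y) by simp only [mul_assoc],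
      show ↑u⁻¹ * x * (conj y * (↑u⁻¹ * b * u)) = ↑u⁻¹ * (x * conj y * (↑u⁻¹ * b)) * u by
        simp only [mul_assoc],
      h.trace_mul_comm _ (u : B), u.mul_inv_cancel_left, h.trace_mul_comm (↑u⁻¹ * b)]

end

theorem statement2_general
    (k : Type) [Field k] [NumberField k] (hk2 : Module.finrank ℚ k = 2)
    (D : ℤ) (hD : D < 0)
    (B : Type) [Ring B] [Algebra ℚ B]
    [IsSimpleRing B]
    (ι : k →ₐ[ℚ] B)
    (conj : B →ₗ[ℚ] B)
    (hconj_mul : ∀ x y : B, conj (x * y) = conj y * conj x)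
    (hconj_conj : ∀ x : B, conj (conj x) = x)
    (hconj_one : conj 1 = 1)
    (σ : k ≃ₐ[ℚ] k) (hσ : σ ≠ AlgEquiv.refl)
    (hconjk : ∀ a : k, conj (ι a) = ι (σ a))
    (Trd : B → ℚ) (hTrd : ∀ x : B, x + conj x = algebraMap ℚ B (Trd x))
    (δ : k) (hδ : δ ^ 2 = algebraMap ℚ k (D : ℚ))
    (lam : B → B → ℚ)
    (hlam : ∀ x y : B, lam x y = Trd (ι δ⁻¹ * x * conj y)) :
    ∀ lam' : B → B → ℚ,
      -- λ' is ℚ-bilinear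
      (∀ x x' y : B, lam' (x + x') y = lam' x y + lam' x' y) →
      (∀ (q : ℚ) (x y : B), lam' (q • x) y = q * lam' x y) →
      (∀ x y y' : B, lam' x (y + y') = lam' x y + lam' x y') →
      (∀ (q : ℚ) (x y : B), lam' x (q • y) = q * lam' x y) →
      -- alternating
      (∀ x : B, lam' x x = 0) →
      -- compatible with the involution †
      (∀ b x y : B, lam' (b * x) y = lam' x (ι δ * conj b * ι δ⁻¹ * y)) →
      ∃ c : ℚ, ∀ x y : B, lam' x y = c * lam x y := by
  intro lam' _ _ hadd hsmul halt hcompat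
  have hδ_irrational : δ ∉ Set.range (algebraMap ℚ k) := by
    rintro ⟨q, rfl⟩
    have hq : q ^ 2 = D := (algebraMap ℚ k).injective (by rw [map_pow, hδ])
    nlinarith [sq_nonneg q, (Int.cast_lt_zero.mpr hD : (D : ℚ) < 0)]
  have hσδ := σ.apply_eq_neg_of_sq_eq_algebraMap hk2 hσ hδ_irrational hδ
  let u : Bˣ := Units.map ι (Units.mk0 δ fun h ↦ hδ_irrational ⟨0, by simp [h]⟩)
  have hinv : IsStandardInvolution conj Trd := ⟨hconj_mul, hconj_conj, hconj_one, hTrd⟩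
  have hu : conj u = -u := by simp [u, hconjk, hσδ]
  have hL' : IsCompatibleAltForm (dagger conj u) lam' :=
    ⟨hadd, hsmul, halt, by simpa [u, dagger_apply] using hcompat⟩
  have hL : IsCompatibleAltForm (dagger conj u) lam := by
    rw [show lam = _ from funext₂ hlam]
    exact hinv.isCompatibleAltForm_trace hu
  have hlam_one : lam 1 u = -2 := by
    rw [hlam, show ι δ⁻¹ = ↑u⁻¹ from rfl, mul_one, hu, mul_neg, u.inv_mul, hinv.trace_neg,
      hinv.trace_one]
  refine ⟨-lam' 1 u / 2, fun x y ↦ ?_⟩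
  linear_combination (hL'.mul_apply_eq_mul_apply hL hinv hu x y + lam' x y * hlam_one) / 2

theorem statement2
    (k : Type) [Field k] [NumberField k] (hk2 : Module.finrank ℚ k = 2)
    (D : ℤ) (hD : D < 0) (hdisc : NumberField.discr k = D)
    (B : Type) [Ring B] [Algebra ℚ B]
    (hB4 : Module.finrank ℚ B = 4)
    [Algebra.IsCentral ℚ B] [IsSimpleRing B]
    (hBindef : Nonempty ((ℝ ⊗[ℚ] B) ≃ₐ[ℝ] Matrix (Fin 2) (Fin 2) ℝ))
    (ι : k →ₐ[ℚ] B) (hι : Function.Injective ι)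
    (conj : B →ₗ[ℚ] B)
    (hconj_mul : ∀ x y : B, conj (x * y) = conj y * conj x)
    (hconj_conj : ∀ x : B, conj (conj x) = x)
    (hconj_one : conj 1 = 1)
    (σ : k ≃ₐ[ℚ] k) (hσ : σ ≠ AlgEquiv.refl)
    (hconjk : ∀ a : k, conj (ι a) = ι (σ a))
    (Trd : B → ℚ) (hTrd : ∀ x : B, x + conj x = algebraMap ℚ B (Trd x))
    (δ : k) (hδ : δ ^ 2 = algebraMap ℚ k (D : ℚ))
    (lam : B → B → ℚ)
    (hlam : ∀ x y : B, lam x y = Trd (ι δ⁻¹ * x * conj y)) :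
    ∀ lam' : B → B → ℚ,
      -- λ' is ℚ-bilinear
      (∀ x x' y : B, lam' (x + x') y = lam' x y + lam' x' y) →
      (∀ (q : ℚ) (x y : B), lam' (q • x) y = q * lam' x y) →
      (∀ x y y' : B, lam' x (y + y') = lam' x y + lam' x y') →
      (∀ (q : ℚ) (x y : B), lam' x (q • y) = q * lam' x y) →
      -- alternating
      (∀ x : B, lam' x x = 0) →
      -- compatible with the involution †
      (∀ b x y : B, lam' (b * x) y = lam' x (ι δ * conj b * ι δ⁻¹ * y)) →
      ∃ c : ℚ, ∀ x y : B, lam' x y = c * lam x y :=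
  statement2_general k hk2 D hD B ι conj hconj_mul hconj_conj hconj_one σ hσ hconjk Trd hTrd δ hδ
    lam hlam
end

section
/- Let k be an imaginary quadratic field and 𝔞 a nonzero fractional ideal of k. Then the ideal class [𝔞] is a square in the class group CL(k) if and only if the ideal norm Nm(𝔞) is the norm of an element of k^×, i.e., Nm(𝔞) ∈ Nm_{k/ℚ}(k^×). -/
/-!
Norms of nonzero elements of an imaginary quadratic field are positive, since `N(x) = |σ x|²` for
a complex embedding `σ`. Hence if `𝔟² 𝔞⁻¹ = (y)`, then `Nm(𝔞) = Nm(𝔟)² / N(y) = N(Nm(𝔟) / y)`.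
Conversely, if `Nm(𝔞) = N(x)` then `𝔞 x⁻¹` has norm one, and writing it as `I (a)⁻¹` with `I`
integral reduces the claim to: integral ideals `I`, `J` of equal norm have `[I][J]⁻¹` a square.
By induction on the norm, peel off prime factors `P ∣ I`, `Q ∣ J` above a common rational prime
`p`: in a quadratic field either `P = Q` or `PQ = (p)`, and then `[P][Q]⁻¹ = [P]²`.
-/

open NumberField
open scoped nonZeroDivisors

variable {K : Type*} [Field K] [NumberField K]

namespace NumberField

open InfinitePlace

open Classical in
theorem InfinitePlace.prod_filter_mk_eq_normSq [IsTotallyComplex K] (w : InfinitePlace K) (x : K) :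
    ∏ φ ∈ Finset.univ.filter (fun φ : K →+* ℂ => InfinitePlace.mk φ = w), φ x =
      (Complex.normSq (w.embedding x) : ℂ) := by
  have hfiber : Finset.univ.filter (fun φ : K →+* ℂ => InfinitePlace.mk φ = w) =
      {w.embedding, ComplexEmbedding.conjugate w.embedding} := by
    ext φ
    simp only [Finset.mem_filter, Finset.mem_univ, true_and, Finset.mem_insert,
      Finset.mem_singleton]
    conv_lhs => rw [← mk_embedding w, mk_eq_iff]
    refine or_congr Iff.rfl ⟨fun h => ?_, fun h => ?_⟩
    · rw [← h, ComplexEmbedding.involutive_conjugate]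
    · rw [h, ComplexEmbedding.involutive_conjugate]
  have hne : w.embedding ≠ ComplexEmbedding.conjugate w.embedding := fun h =>
    IsTotallyComplex.complexEmbedding_not_isReal w.embedding
      (ComplexEmbedding.isReal_iff.mpr h.symm)
  rw [hfiber, Finset.prod_pair hne, ComplexEmbedding.conjugate_coe_eq, Complex.mul_conj]

theorem IsTotallyComplex.norm_pos [IsTotallyComplex K] {x : K} (hx : x ≠ 0) :
    0 < Algebra.norm ℚ x := by
  classical
  have key : (algebraMap ℚ ℂ (Algebra.norm ℚ x)) =
      ((∏ w : InfinitePlace K, Complex.normSq (w.embedding x) : ℝ) : ℂ) := by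
    rw [Algebra.norm_eq_prod_embeddings ℚ ℂ x, ← Fintype.prod_equiv (RingHom.equivRatAlgHom K ℂ)
      (fun φ => φ x) _ (fun _ => rfl), ← Finset.prod_fiberwise Finset.univ InfinitePlace.mk]
    push_cast
    exact Finset.prod_congr rfl fun w _ => InfinitePlace.prod_filter_mk_eq_normSq w x
  have hpos : 0 < ∏ w : InfinitePlace K, Complex.normSq (w.embedding x) :=
    Finset.prod_pos fun w _ => Complex.normSq_pos.mpr ((map_ne_zero _).mpr hx)
  rw [eq_ratCast, ← Complex.ofReal_ratCast, Complex.ofReal_inj] at key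
  exact_mod_cast key ▸ hpos

theorem isTotallyComplex_of_finrank_eq_two_of_discr_neg (hK : Module.finrank ℚ K = 2)
    (hd : discr K < 0) : IsTotallyComplex K := by
  have hsign := sign_discr K
  rw [Int.sign_eq_neg_one_of_neg hd, eq_comm, neg_one_pow_eq_neg_one_iff_odd (by norm_num)] at hsign
  have hrank := card_add_two_mul_card_eq_rank K
  rw [← nrRealPlaces_eq_zero_iff]
  obtain ⟨m, hm⟩ := hsign
  omega

end NumberField

namespace Ideal

theorem dvd_absNorm_of_natCast_mem {P : Ideal (𝓞 K)} (hP : P ≠ ⊤) {p : ℕ} (hp : p.Prime)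
    (hpP : (p : 𝓞 K) ∈ P) : p ∣ absNorm P := by
  have hdvd : absNorm P ∣ p ^ Module.finrank ℤ (𝓞 K) := by
    rw [← absNorm_span_natCast]
    exact absNorm_dvd_absNorm_of_le ((span_singleton_le_iff_mem P).mpr hpP)
  obtain ⟨i, -, hi⟩ := (Nat.dvd_prime_pow hp).mp hdvd
  have hi0 : i ≠ 0 := by
    rintro rfl
    exact hP (absNorm_eq_one_iff.mp (by simpa using hi))
  exact hi ▸ dvd_pow_self p hi0

variable {S : Type*} [CommRing S] [IsDedekindDomain S] [Module.Free ℤ S] [Module.Finite ℤ S]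

theorem natCast_mem_of_dvd_absNorm {P : Ideal S} [P.IsPrime] (hP : P ≠ ⊥) {p : ℕ}
    (hp : p.Prime) (hdvd : p ∣ absNorm P) : (p : S) ∈ P := by
  have : NeZero P := ⟨hP⟩
  have hq := Nat.absNorm_under_prime P
  rw [absNorm_eq_pow_inertiaDeg' P hq] at hdvd
  rw [(Nat.prime_dvd_prime_iff_eq hp hq).mp (hp.dvd_of_dvd_pow hdvd)]
  exact Int.absNorm_under_mem P

theorem exists_isPrime_dvd_natCast_mem {I : Ideal S} (hI : I ≠ ⊥) {p : ℕ} (hp : p.Prime)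
    (hdvd : p ∣ absNorm I) : ∃ P : Ideal S, P.IsPrime ∧ P ≠ ⊥ ∧ P ∣ I ∧ (p : S) ∈ P := by
  classical
  rw [← prod_normalizedFactors_eq_self hI, map_multiset_prod] at hdvd
  obtain ⟨_, hmem, hpP⟩ := hp.prime.exists_mem_multiset_dvd hdvd
  obtain ⟨P, hP, rfl⟩ := Multiset.mem_map.mp hmem
  have hPprime := UniqueFactorizationMonoid.prime_of_normalized_factor P hP
  have hPisPrime : P.IsPrime := isPrime_of_prime hPprime
  exact ⟨P, hPisPrime, hPprime.ne_zero, UniqueFactorizationMonoid.dvd_of_mem_normalizedFactors hP,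
    natCast_mem_of_dvd_absNorm hPprime.ne_zero hp hpP⟩

theorem exists_isPrime_mul_eq {I : (Ideal S)⁰} {p : ℕ} (hp : p.Prime)
    (hdvd : p ∣ absNorm (I : Ideal S)) :
    ∃ P I₁ : (Ideal S)⁰, (P : Ideal S).IsPrime ∧ (p : S) ∈ (P : Ideal S) ∧ I = P * I₁ := by
  have hI : (I : Ideal S) ≠ ⊥ := nonZeroDivisors.coe_ne_zero I
  obtain ⟨P, hPprime, hP, ⟨I₁, hI₁⟩, hpP⟩ := exists_isPrime_dvd_natCast_mem hI hp hdvd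
  have hI₁0 : I₁ ≠ ⊥ := by rintro rfl; exact hI (by rw [hI₁, mul_bot])
  exact ⟨⟨P, mem_nonZeroDivisors_of_ne_zero hP⟩, ⟨I₁, mem_nonZeroDivisors_of_ne_zero hI₁0⟩,
    hPprime, hpP, Subtype.ext hI₁⟩

section Quadratic

variable (hK : Module.finrank ℚ K = 2)
include hK

theorem mul_eq_span_natCast_of_ne {P Q : Ideal (𝓞 K)} [P.IsPrime] [Q.IsPrime] (hP : P ≠ ⊥)
    (hQ : Q ≠ ⊥) (hPQ : P ≠ Q) {p : ℕ} (hp : p.Prime) (hpP : (p : 𝓞 K) ∈ P)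
    (hpQ : (p : 𝓞 K) ∈ Q) : P * Q = span {(p : 𝓞 K)} := by
  have hcop : P ⊔ Q = ⊤ := (IsPrime.isMaximal ‹_› hP).coprime_of_ne (IsPrime.isMaximal ‹_› hQ) hPQ
  have hle : span {(p : 𝓞 K)} ≤ P * Q := by
    rw [mul_eq_inf_of_coprime hcop, span_singleton_le_iff_mem]
    exact ⟨hpP, hpQ⟩
  obtain ⟨C, hC⟩ := dvd_iff_le.mpr hle
  have hnorm := congrArg absNorm hC
  rw [absNorm_span_natCast, RingOfIntegers.rank, hK, map_mul, map_mul] at hnorm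
  obtain ⟨a, ha⟩ := dvd_absNorm_of_natCast_mem (IsPrime.ne_top ‹_›) hp hpP
  obtain ⟨b, hb⟩ := dvd_absNorm_of_natCast_mem (IsPrime.ne_top ‹_›) hp hpQ
  have hC1 : absNorm C = 1 := by
    rw [ha, hb] at hnorm
    have : a * b * absNorm C = 1 := by
      have := hp.pos
      nlinarith [hnorm]
    exact Nat.eq_one_of_mul_eq_one_left this
  rw [hC, absNorm_eq_one_iff.mp hC1, mul_top]

theorem absNorm_eq_and_isSquare_mk0_div {P Q : (Ideal (𝓞 K))⁰} [(P : Ideal (𝓞 K)).IsPrime]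
    [(Q : Ideal (𝓞 K)).IsPrime] {p : ℕ} (hp : p.Prime) (hpP : (p : 𝓞 K) ∈ (P : Ideal (𝓞 K)))
    (hpQ : (p : 𝓞 K) ∈ (Q : Ideal (𝓞 K))) :
    absNorm (P : Ideal (𝓞 K)) = absNorm (Q : Ideal (𝓞 K)) ∧
      IsSquare (ClassGroup.mk0 P / ClassGroup.mk0 Q) := by
  rcases eq_or_ne (P : Ideal (𝓞 K)) Q with h | h
  · obtain rfl := Subtype.ext h
    simp
  have hPQ := mul_eq_span_natCast_of_ne hK (nonZeroDivisors.coe_ne_zero P)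
    (nonZeroDivisors.coe_ne_zero Q) h hp hpP hpQ
  have hone : ClassGroup.mk0 P * ClassGroup.mk0 Q = 1 := by
    rw [← map_mul]
    exact (ClassGroup.mk0_eq_one_iff (P * Q).2).mpr ⟨⟨p, hPQ⟩⟩
  refine ⟨?_, ClassGroup.mk0 P, by rw [eq_inv_of_mul_eq_one_right hone, div_inv_eq_mul]⟩
  have hnorm := congrArg absNorm hPQ
  rw [absNorm_span_natCast, RingOfIntegers.rank, hK, map_mul] at hnorm
  obtain ⟨a, ha⟩ := dvd_absNorm_of_natCast_mem (IsPrime.ne_top ‹_›) hp hpP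
  obtain ⟨b, hb⟩ := dvd_absNorm_of_natCast_mem (IsPrime.ne_top ‹_›) hp hpQ
  rw [ha, hb] at hnorm ⊢
  have hab : a * b = 1 := by
    have := hp.pos
    nlinarith [hnorm]
  rw [Nat.eq_one_of_mul_eq_one_right hab, Nat.eq_one_of_mul_eq_one_left hab]

theorem isSquare_mk0_div_of_absNorm_eq (I J : (Ideal (𝓞 K))⁰)
    (h : absNorm (I : Ideal (𝓞 K)) = absNorm (J : Ideal (𝓞 K))) :
    IsSquare (ClassGroup.mk0 I / ClassGroup.mk0 J) := by
  induction hn : absNorm (I : Ideal (𝓞 K)) using Nat.strong_induction_on generalizing I J with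
  | _ n ih =>
  rcases eq_or_ne n 1 with rfl | hn1
  · have hIJ : I = J := Subtype.ext <|
      (absNorm_eq_one_iff.mp hn).trans (absNorm_eq_one_iff.mp (h ▸ hn)).symm
    simp [hIJ]
  have hp := Nat.minFac_prime hn1
  obtain ⟨P, I₁, hP, hpP, rfl⟩ := exists_isPrime_mul_eq hp (I := I) (hn ▸ Nat.minFac_dvd n)
  obtain ⟨Q, J₁, hQ, hpQ, rfl⟩ := exists_isPrime_mul_eq hp (I := J) (h ▸ hn ▸ Nat.minFac_dvd n)
  obtain ⟨hPQ, hsq⟩ := absNorm_eq_and_isSquare_mk0_div hK hp hpP hpQ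
  simp only [Submonoid.coe_mul, map_mul] at h hn
  have hP0 : absNorm (P : Ideal (𝓞 K)) ≠ 0 := absNorm_ne_zero_of_nonZeroDivisors P
  have hP1 : absNorm (P : Ideal (𝓞 K)) ≠ 1 := fun h1 => hP.ne_top (absNorm_eq_one_iff.mp h1)
  have hI₁0 : absNorm (I₁ : Ideal (𝓞 K)) ≠ 0 := absNorm_ne_zero_of_nonZeroDivisors I₁
  have heq : absNorm (I₁ : Ideal (𝓞 K)) = absNorm (J₁ : Ideal (𝓞 K)) := by
    rw [hPQ] at h
    exact Nat.eq_of_mul_eq_mul_left (Nat.pos_of_ne_zero (hPQ ▸ hP0)) h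
  have hlt : absNorm (I₁ : Ideal (𝓞 K)) < n := by
    rw [← hn]
    exact lt_mul_of_one_lt_left (Nat.pos_of_ne_zero hI₁0) (by omega)
  rw [map_mul, map_mul, mul_div_mul_comm]
  exact hsq.mul (ih _ hlt I₁ J₁ heq rfl)

end Quadratic

end Ideal

namespace ClassGroup

open FractionalIdeal

theorem mk_toPrincipalIdeal {R L : Type*} [CommRing R] [IsDomain R] [Field L] [Algebra R L]
    [IsFractionRing R L] (x : Lˣ) : mk L (toPrincipalIdeal R L x) = 1 :=
  mk_eq_one_iff.mpr ⟨⟨x, by rw [coe_toPrincipalIdeal, coe_spanSingleton]⟩⟩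

theorem exists_abs_norm_eq_absNorm_of_mk_eq_one {I : (FractionalIdeal (𝓞 K)⁰ K)ˣ}
    (h : mk K I = 1) :
    ∃ y : K, y ≠ 0 ∧ |Algebra.norm ℚ y| = absNorm (I : FractionalIdeal (𝓞 K)⁰ K) := by
  obtain ⟨y, hy⟩ := (mk_eq_one_iff.mp h).principal
  have hI : (I : FractionalIdeal (𝓞 K)⁰ K) = spanSingleton _ y :=
    coeToSubmodule_injective (by simp only [hy, coe_spanSingleton])
  refine ⟨y, ?_, by rw [hI, absNorm_span_singleton]⟩
  rintro rfl
  exact I.ne_zero (by rw [hI, spanSingleton_zero])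

section Quadratic

variable (hK : Module.finrank ℚ K = 2)
include hK

theorem isSquare_mk_of_absNorm_eq_one {I : (FractionalIdeal (𝓞 K)⁰ K)ˣ}
    (h : absNorm (I : FractionalIdeal (𝓞 K)⁰ K) = 1) : IsSquare (mk K I) := by
  obtain ⟨a, I₀, ha, hI⟩ := exists_eq_spanSingleton_mul (I : FractionalIdeal (𝓞 K)⁰ K)
  have haK : algebraMap (𝓞 K) K a ≠ 0 := by simpa using ha
  have hI₀ : I₀ ∈ (Ideal (𝓞 K))⁰ := mem_nonZeroDivisors_of_ne_zero <| by
    rintro rfl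
    exact I.ne_zero (by simp [hI])
  have hmk : mk K I = mk0 ⟨I₀, hI₀⟩ := by
    have : FractionalIdeal.mk0 K ⟨I₀, hI₀⟩ = toPrincipalIdeal _ K (Units.mk0 _ haK) * I := by
      ext1
      rw [Units.val_mul, coe_mk0, coe_toPrincipalIdeal, Units.val_mk0, hI, ← mul_assoc,
        spanSingleton_mul_spanSingleton, mul_inv_cancel₀ haK, spanSingleton_one, one_mul]
    rw [← mk_mk0 K, this, map_mul, mk_toPrincipalIdeal, one_mul]
  have hnorm : Ideal.absNorm I₀ = Ideal.absNorm (Ideal.span {a}) := by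
    have ha' : absNorm (spanSingleton (𝓞 K)⁰ (algebraMap (𝓞 K) K a)) ≠ 0 := by simpa using haK
    rw [hI, map_mul, ← spanSingleton_inv, map_inv₀, inv_mul_eq_one₀ ha',
      ← coeIdeal_span_singleton, coeIdeal_absNorm, coeIdeal_absNorm] at h
    exact_mod_cast h.symm
  have := Ideal.isSquare_mk0_div_of_absNorm_eq hK ⟨I₀, hI₀⟩
    ⟨_, mem_nonZeroDivisors_of_ne_zero (Ideal.span_singleton_eq_bot.not.mpr ha)⟩ hnorm
  rwa [(mk0_eq_one_iff _).mpr ⟨⟨a, rfl⟩⟩, _root_.div_one, ← hmk] at this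

theorem isSquare_mk_of_norm_eq_absNorm {I : (FractionalIdeal (𝓞 K)⁰ K)ˣ} {x : K} (hx : x ≠ 0)
    (h : Algebra.norm ℚ x = absNorm (I : FractionalIdeal (𝓞 K)⁰ K)) : IsSquare (mk K I) := by
  have hxI : absNorm (((toPrincipalIdeal _ K (Units.mk0 x hx))⁻¹ * I :
      (FractionalIdeal (𝓞 K)⁰ K)ˣ) : FractionalIdeal (𝓞 K)⁰ K) = 1 := by
    rw [Units.val_mul, map_mul, Units.val_inv_eq_inv_val, map_inv₀, coe_toPrincipalIdeal,
      Units.val_mk0, absNorm_span_singleton, ← h, abs_of_nonneg (h ▸ absNorm_nonneg _),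
      inv_mul_cancel₀ (Algebra.norm_ne_zero_iff.mpr hx)]
  simpa [mk_toPrincipalIdeal] using isSquare_mk_of_absNorm_eq_one hK hxI

theorem exists_norm_eq_absNorm_of_isSquare_mk [IsTotallyComplex K]
    {I : (FractionalIdeal (𝓞 K)⁰ K)ˣ} (h : IsSquare (mk K I)) :
    ∃ x : K, x ≠ 0 ∧ Algebra.norm ℚ x = absNorm (I : FractionalIdeal (𝓞 K)⁰ K) := by
  obtain ⟨c, hc⟩ := h
  obtain ⟨B, rfl⟩ := mk0_surjective c
  set 𝔟 := FractionalIdeal.mk0 K B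
  have hprincipal : mk K (𝔟 * 𝔟 * I⁻¹) = 1 := by
    rw [map_mul, map_mul, map_inv, mk_mk0, hc, mul_inv_cancel]
  obtain ⟨y, hy0, hy⟩ := exists_abs_norm_eq_absNorm_of_mk_eq_one hprincipal
  rw [abs_of_pos (IsTotallyComplex.norm_pos hy0)] at hy
  have h𝔟 : absNorm (𝔟 : FractionalIdeal (𝓞 K)⁰ K) ≠ 0 := by simp
  refine ⟨algebraMap ℚ K (absNorm (𝔟 : FractionalIdeal (𝓞 K)⁰ K)) * y⁻¹, ?_, ?_⟩
  · exact mul_ne_zero (by simp [h𝔟]) (inv_ne_zero hy0)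
  rw [map_mul, Algebra.norm_algebraMap, hK, Algebra.norm_inv, hy]
  simp only [Units.val_mul, map_mul, Units.val_inv_eq_inv_val, map_inv₀]
  field_simp

end Quadratic

end ClassGroup

theorem statement9
    (k : Type) [Field k] [NumberField k]
    (hk2 : Module.finrank ℚ k = 2) (him : NumberField.discr k < 0)
    (𝔞 : (FractionalIdeal (𝓞 k)⁰ k)ˣ) :
    (∃ c : ClassGroup (𝓞 k), c ^ 2 = ClassGroup.mk k 𝔞) ↔
      ∃ x : k, x ≠ 0 ∧
        Algebra.norm ℚ x = FractionalIdeal.absNorm (𝔞 : FractionalIdeal (𝓞 k)⁰ k) := by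
  have : IsTotallyComplex k := isTotallyComplex_of_finrank_eq_two_of_discr_neg hk2 him
  have hsq : (∃ c, c ^ 2 = ClassGroup.mk k 𝔞) ↔ IsSquare (ClassGroup.mk k 𝔞) := by
    simp [isSquare_iff_exists_sq, eq_comm]
  rw [hsq]
  exact ⟨ClassGroup.exists_norm_eq_absNorm_of_isSquare_mk hk2,
    fun ⟨x, hx, h⟩ => ClassGroup.isSquare_mk_of_norm_eq_absNorm hk2 hx h⟩
end

section
/- Let k be an imaginary quadratic field of odd discriminant and let 𝔞, 𝔟 be nonzero fractional ideals of k. Then the self-dual hermitian O_k-modules L_𝔞 = O_k ⊕ 𝔞 and L_𝔟 = O_k ⊕ 𝔟 (with forms ⟨(x₁,x₂),(y₁,y₂)⟩ = x₁ȳ₁ − x₂ȳ₂/Nm(𝔞), resp. the analogous form for 𝔟) are isometric if and only if [𝔞] = [𝔟] in the ideal class group CL(k). -/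
/-!
Forward direction: an `O_k`-isomorphism `O_k ⊕ 𝔞 ≅ O_k ⊕ 𝔟` is, after tensoring with `k`, a
`2 × 2` matrix `M` over `k`. In `det M · x = M₀₀ (M₁₁ x) - (M₀₁ x) M₁₀` for `x ∈ 𝔞`, the
factors `M₀₀, M₀₁ x` lie in `O_k` and `M₁₀, M₁₁ x` in `𝔟`, so `det M · 𝔞 ⊆ 𝔟`;
the inverse isomorphism gives `det M⁻¹ · 𝔟 ⊆ 𝔞`, so `𝔟 = (det M) 𝔞`. The forms play no role
here.

Backward direction: if `𝔟 = c 𝔞`, then `(x₁, x₂) ↦ (x₁, c x₂)` is an isometry, since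
`Nm 𝔟 = |N c| Nm 𝔞` and `N c = c c̄ > 0` in an imaginary quadratic field.
-/

open NumberField
open scoped nonZeroDivisors

/-- The underlying `O_k`-module of the hermitian module `L_𝔞 = O_k ⊕ 𝔞`. -/
abbrev LatA (k : Type) [Field k] [NumberField k]
    (𝔞 : (FractionalIdeal (𝓞 k)⁰ k)ˣ) : Type :=
  𝓞 k × ((𝔞 : FractionalIdeal (𝓞 k)⁰ k) : Submodule (𝓞 k) k)

/-- The hermitian form `⟨(x₁,x₂),(y₁,y₂)⟩ = x₁ȳ₁ − x₂ȳ₂/Nm(𝔞)` on `L_𝔞 = O_k ⊕ 𝔞`,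
written with values in `k` (on `L_𝔞` it takes values in `O_k`). -/
noncomputable def formA {k : Type} [Field k] [NumberField k] (σ : k ≃ₐ[ℚ] k)
    (𝔞 : (FractionalIdeal (𝓞 k)⁰ k)ˣ) (x y : LatA k 𝔞) : k :=
  algebraMap (𝓞 k) k x.1 * σ (algebraMap (𝓞 k) k y.1) -
    (x.2 : k) * σ (y.2 : k) /
      algebraMap ℚ k (FractionalIdeal.absNorm (𝔞 : FractionalIdeal (𝓞 k)⁰ k))

open NumberField.ComplexEmbedding NumberField.InfinitePlace FractionalIdeal
open scoped Pointwise Matrix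

section Quadratic

variable {F K : Type*} [Field F] [Field K] [Algebra F K] [Algebra.IsQuadraticExtension F K]
  [IsGalois F K]

theorem AlgEquiv.eq_of_ne_one_of_isQuadraticExtension {σ τ : Gal(K/F)} (hσ : σ ≠ 1)
    (hτ : τ ≠ 1) : σ = τ := by
  have hcard : Nat.card Gal(K/F) = 2 := by
    rw [IsGalois.card_aut_eq_finrank, Algebra.IsQuadraticExtension.finrank_eq_two]
  exact ((Nat.card_eq_two_iff' 1).mp hcard).unique hσ hτ

theorem Algebra.algebraMap_norm_eq_mul_of_isQuadraticExtension {σ : Gal(K/F)} (hσ : σ ≠ 1)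
    (x : K) : algebraMap F K (Algebra.norm F x) = x * σ x := by
  rw [Algebra.norm_eq_prod_automorphisms, Finset.prod_eq_mul 1 σ hσ.symm]
  · rfl
  · rintro τ - ⟨hτ1, hτσ⟩
    exact absurd (AlgEquiv.eq_of_ne_one_of_isQuadraticExtension hτ1 hσ) hτσ
  all_goals simp

end Quadratic

section ImaginaryQuadratic

variable {K : Type*} [Field K] [NumberField K]

theorem NumberField.exists_isComplex_of_discr_neg (h : discr K < 0) :
    ∃ w : InfinitePlace K, w.IsComplex := by
  have hsign := sign_discr K
  rw [Int.sign_eq_neg_one_of_neg h] at hsign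
  by_contra! hw
  have : nrComplexPlaces K = 0 := by simp [nrComplexPlaces, hw]
  simp [this] at hsign

theorem NumberField.ComplexEmbedding.exists_isConj [IsGalois ℚ K] (φ : K →+* ℂ) :
    ∃ σ : Gal(K/ℚ), IsConj φ σ := by
  obtain ⟨σ, hσ⟩ :=
    exists_comp_symm_eq_of_comp_eq (k := ℚ) φ (conjugate φ) (Subsingleton.elim _ _)
  exact ⟨σ.symm, hσ.symm⟩

theorem NumberField.norm_pos_of_discr_neg [Algebra.IsQuadraticExtension ℚ K]
    (h : discr K < 0) {x : K} (hx : x ≠ 0) : 0 < Algebra.norm ℚ x := by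
  obtain ⟨w, hw⟩ := exists_isComplex_of_discr_neg h
  obtain ⟨σ, hσ⟩ := exists_isConj w.embedding
  have hσ1 : σ ≠ 1 := (isConj_ne_one_iff hσ).mpr (isComplex_iff.mp hw)
  have key := congrArg w.embedding (Algebra.algebraMap_norm_eq_mul_of_isQuadraticExtension hσ1 x)
  rw [map_mul, hσ.eq, eq_ratCast, map_ratCast] at key
  have hnormSq : ((Algebra.norm ℚ x : ℝ) : ℂ) = (Complex.normSq (w.embedding x) : ℝ) := by
    rw [Complex.normSq_eq_conj_mul_self, mul_comm]
    exact_mod_cast key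
  have hpos : (0 : ℝ) < Algebra.norm ℚ x := by
    rw [Complex.ofReal_inj.mp hnormSq]
    exact Complex.normSq_pos.mpr ((_root_.map_ne_zero _).mpr hx)
  exact_mod_cast hpos

end ImaginaryQuadratic

section Steinitz

variable {R K : Type*} [CommRing R] [Field K] [Algebra R K]

theorem IsFractionRing.exists_smul_eq_smul [IsDomain R] [IsFractionRing R K] (x : K) {y : K}
    (hy : y ≠ 0) : ∃ a b : R, a ≠ 0 ∧ a • x = b • y := by
  obtain ⟨⟨n, d⟩, hnd⟩ := IsLocalization.surj R⁰ x
  obtain ⟨⟨n', d'⟩, hnd'⟩ := IsLocalization.surj R⁰ y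
  simp only at hnd hnd'
  have hn' : n' ≠ 0 := by
    rintro rfl
    simp [nonZeroDivisors.ne_zero d'.2, hy] at hnd'
  refine ⟨n' * d, n * d', mul_ne_zero hn' (nonZeroDivisors.ne_zero d.2), ?_⟩
  simp only [Algebra.smul_def, map_mul, ← hnd, ← hnd']
  ring

theorem Submodule.exists_eq_mul_of_linearMap [IsDomain R] [IsFractionRing R K]
    (M : Submodule R K) (f : M →ₗ[R] K) : ∃ c : K, ∀ x : M, f x = c * x := by
  by_cases! hM : ∀ y : M, (y : K) = 0
  · exact ⟨0, fun x => by simp [show x = 0 from Subtype.ext (hM x)]⟩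
  obtain ⟨y, hy⟩ := hM
  refine ⟨f y / y, fun x => ?_⟩
  obtain ⟨a, b, ha, hab⟩ := IsFractionRing.exists_smul_eq_smul (R := R) (x : K) hy
  have hfab : a • f x = b • f y := by
    rw [← map_smul, ← map_smul]
    exact congrArg f (Subtype.ext hab)
  rw [Algebra.smul_def, Algebra.smul_def] at hab hfab
  have ha' : algebraMap R K a ≠ 0 := IsFractionRing.to_map_eq_zero_iff.not.mpr ha
  field_simp
  apply mul_left_cancel₀ ha'
  linear_combination (y : K) * hfab - f y * hab

variable {I J : Submodule R K}

def Submodule.prodVec (I : Submodule R K) (z : R × I) : Fin 2 → K :=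
  ![algebraMap R K z.1, z.2]

theorem Submodule.exists_matrix_of_linearMap [IsDomain R] [IsFractionRing R K]
    (φ : R × I →ₗ[R] R × J) :
    ∃ M : Matrix (Fin 2) (Fin 2) K, ∀ z, J.prodVec (φ z) = M *ᵥ I.prodVec z := by
  obtain ⟨r, hr⟩ := I.exists_eq_mul_of_linearMap
    ((Algebra.linearMap R K).comp ((LinearMap.fst R R J).comp (φ.comp (LinearMap.inr R R I))))
  obtain ⟨s, hs⟩ := I.exists_eq_mul_of_linearMap
    (J.subtype.comp ((LinearMap.snd R R J).comp (φ.comp (LinearMap.inr R R I))))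
  refine ⟨!![algebraMap R K (φ (1, 0)).1, r; (φ (1, 0)).2, s], fun z => ?_⟩
  have hz : φ z = z.1 • φ (1, 0) + φ (0, z.2) := by
    rw [← map_smul, ← map_add]
    simp
  simp only [LinearMap.coe_comp, Function.comp_apply, LinearMap.inr_apply, LinearMap.fst_apply,
    Algebra.linearMap_apply, Submodule.subtype_apply, LinearMap.snd_apply] at hr hs
  ext i
  fin_cases i <;> simp [Submodule.prodVec, hz, hr, hs, Algebra.smul_def, mul_comm]

theorem Submodule.det_mul_mem {φ : R × I →ₗ[R] R × J} {M : Matrix (Fin 2) (Fin 2) K}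
    (hM : ∀ z, J.prodVec (φ z) = M *ᵥ I.prodVec z) {x : K} (hx : x ∈ I) : M.det * x ∈ J := by
  have e (z : R × I) (i : Fin 2) := congrFun (hM z) i
  have h₀₀ := e (1, 0) 0
  have h₁₀ := e (1, 0) 1
  have h₀₁ := e (0, ⟨x, hx⟩) 0
  have h₁₁ := e (0, ⟨x, hx⟩) 1
  simp only [prodVec, Fin.isValue, Matrix.cons_val_zero, Matrix.mulVec, dotProduct, map_one,
    ZeroMemClass.coe_zero, Fin.sum_univ_two, mul_one, Matrix.cons_val_one, Matrix.cons_val_fin_one,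
    mul_zero, add_zero, map_zero, zero_add] at h₀₀ h₁₀ h₀₁ h₁₁
  have hdet : M.det * x = (φ (1, 0)).1 • ((φ (0, ⟨x, hx⟩)).2 : K)
      - (φ (0, ⟨x, hx⟩)).1 • ((φ (1, 0)).2 : K) := by
    rw [Matrix.det_fin_two, Algebra.smul_def, Algebra.smul_def, h₀₀, h₁₀, h₀₁, h₁₁]
    ring
  rw [hdet]
  exact J.sub_mem (J.smul_mem _ (φ _).2.2) (J.smul_mem _ (φ _).2.2)

theorem Submodule.matrix_mul_eq_one {φ : R × I →ₗ[R] R × J} {ψ : R × J →ₗ[R] R × I}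
    (hψφ : ∀ z, ψ (φ z) = z) (hI : I ≠ ⊥) {M N : Matrix (Fin 2) (Fin 2) K}
    (hM : ∀ z, J.prodVec (φ z) = M *ᵥ I.prodVec z)
    (hN : ∀ z, I.prodVec (ψ z) = N *ᵥ J.prodVec z) : N * M = 1 := by
  obtain ⟨x, hx, hx0⟩ := I.exists_mem_ne_zero_of_ne_bot hI
  have e (z : R × I) (i : Fin 2) : I.prodVec z i = ((N * M) *ᵥ I.prodVec z) i := by
    rw [← Matrix.mulVec_mulVec, ← hM, ← hN, hψφ]
  have h₀₀ := e (1, 0) 0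
  have h₁₀ := e (1, 0) 1
  have h₀₁ := e (0, ⟨x, hx⟩) 0
  have h₁₁ := e (0, ⟨x, hx⟩) 1
  simp only [prodVec, map_one, ZeroMemClass.coe_zero, Fin.isValue, Matrix.cons_val_zero,
    Matrix.mulVec, dotProduct, Fin.sum_univ_two, mul_one, Matrix.cons_val_one,
    Matrix.cons_val_fin_one, mul_zero, add_zero, map_zero, zero_add, zero_eq_mul, hx0, or_false,
    ne_eq, not_false_eq_true, right_eq_mul₀] at h₀₀ h₁₀ h₀₁ h₁₁
  ext i j
  fin_cases i <;> fin_cases j <;> simp [← h₀₀, ← h₁₀, h₀₁, ← h₁₁]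

theorem Submodule.exists_smul_eq_of_linearEquiv [IsDomain R] [IsFractionRing R K] (hI : I ≠ ⊥)
    (φ : (R × I) ≃ₗ[R] (R × J)) : ∃ c : K, c ≠ 0 ∧ c • I = J := by
  obtain ⟨M, hM⟩ := exists_matrix_of_linearMap φ.toLinearMap
  obtain ⟨N, hN⟩ := exists_matrix_of_linearMap φ.symm.toLinearMap
  have hdet : N.det * M.det = 1 := by
    rw [← Matrix.det_mul, matrix_mul_eq_one φ.symm_apply_apply hI hM hN, Matrix.det_one]
  have hM0 : M.det ≠ 0 := right_ne_zero_of_mul_eq_one hdet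
  refine ⟨M.det, hM0, le_antisymm ?_ fun y hy => ?_⟩
  · rintro _ ⟨x, hx, rfl⟩
    exact det_mul_mem hM hx
  · rw [mem_smul_iff_inv_mul_mem hM0, ← eq_inv_of_mul_eq_one_left hdet]
    exact det_mul_mem hN hy

noncomputable def Submodule.smulEquivOfEq {c : K} (hc : c ≠ 0) (h : c • I = J) : I ≃ₗ[R] J :=
  (I.equivMapOfInjective (DistribSMul.toLinearMap R K c) (smul_right_injective K hc)).trans
    (LinearEquiv.ofEq _ _ h)

@[simp]
theorem Submodule.coe_smulEquivOfEq {c : K} (hc : c ≠ 0) (h : c • I = J) (x : I) :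
    (Submodule.smulEquivOfEq hc h x : K) = c * x :=
  rfl

end Steinitz

section ClassGroup

variable {R K : Type*} [CommRing R] [Field K] [Algebra R K] [IsFractionRing R K]

theorem FractionalIdeal.coe_spanSingleton_mul (c : K) (I : FractionalIdeal R⁰ K) :
    ((spanSingleton R⁰ c * I : FractionalIdeal R⁰ K) : Submodule R K) = c • (I : Submodule R K) :=
  by rw [coe_mul, coe_spanSingleton, Submodule.span_singleton_mul]

theorem ClassGroup.mk_eq_mk_iff_exists_smul_eq [IsDomain R] {I J : (FractionalIdeal R⁰ K)ˣ} :
    ClassGroup.mk K I = ClassGroup.mk K J ↔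
      ∃ c : K, c ≠ 0 ∧ c • (I : Submodule R K) = J := by
  rw [← (ClassGroup.equiv K).injective.eq_iff, ClassGroup.equiv_mk, ClassGroup.equiv_mk]
  simp only [canonicalEquiv_self, RingEquiv.coe_mulEquiv_refl]
  change QuotientGroup.mk' _ I = QuotientGroup.mk' _ J ↔ _
  have hmul (x : Kˣ) : ((I * toPrincipalIdeal R K x : (FractionalIdeal R⁰ K)ˣ) : Submodule R K) =
      (x : K) • (I : Submodule R K) := by
    rw [Units.val_mul, coe_toPrincipalIdeal, mul_comm, coe_spanSingleton_mul]
  rw [QuotientGroup.mk'_eq_mk']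
  constructor
  · rintro ⟨_, ⟨x, rfl⟩, h⟩
    exact ⟨x, x.ne_zero, by rw [← hmul, h]⟩
  · rintro ⟨c, hc, h⟩
    refine ⟨_, ⟨Units.mk0 c hc, rfl⟩, Units.ext (coeToSubmodule_injective ?_)⟩
    exact (hmul _).trans h

end ClassGroup

theorem FractionalIdeal.absNorm_eq_of_smul_eq {K : Type*} [Field K] [NumberField K]
    {I J : FractionalIdeal (𝓞 K)⁰ K} {c : K} (h : c • (I : Submodule (𝓞 K) K) = J) :
    absNorm J = |Algebra.norm ℚ c| * absNorm I := by
  rw [← coeToSubmodule_inj.mp ((coe_spanSingleton_mul c I).trans h), map_mul,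
    absNorm_span_singleton]

theorem formA_prodCongr_smulEquivOfEq {k : Type} [Field k] [NumberField k] (σ : k ≃ₐ[ℚ] k)
    {𝔞 𝔟 : (FractionalIdeal (𝓞 k)⁰ k)ˣ} {c : k} (hc : c ≠ 0)
    (h : c • ((𝔞 : FractionalIdeal (𝓞 k)⁰ k) : Submodule (𝓞 k) k) = 𝔟)
    (hnorm : algebraMap ℚ k (Algebra.norm ℚ c) = c * σ c) (hpos : 0 < Algebra.norm ℚ c)
    (x y : LatA k 𝔞) :
    formA σ 𝔟 ((LinearEquiv.refl _ _).prodCongr (Submodule.smulEquivOfEq hc h) x)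
        ((LinearEquiv.refl _ _).prodCongr (Submodule.smulEquivOfEq hc h) y) =
      formA σ 𝔞 x y := by
  have hN𝔞 : algebraMap ℚ k (absNorm (𝔞 : FractionalIdeal (𝓞 k)⁰ k)) ≠ 0 := by simp
  have hσc : σ c ≠ 0 := (map_ne_zero σ).mpr hc
  simp only [formA, LinearEquiv.prodCongr_apply, LinearEquiv.refl_apply,
    Submodule.coe_smulEquivOfEq, absNorm_eq_of_smul_eq h, abs_of_pos hpos, map_mul, hnorm]
  field_simp

theorem statement11_general
    (k : Type) [Field k] [NumberField k]
    (hk2 : Module.finrank ℚ k = 2) (him : NumberField.discr k < 0)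
    -- complex conjugation, i.e. the nontrivial automorphism of k
    (σ : k ≃ₐ[ℚ] k) (hσ : σ ≠ AlgEquiv.refl)
    (𝔞 𝔟 : (FractionalIdeal (𝓞 k)⁰ k)ˣ) :
    (∃ φ : LatA k 𝔞 ≃ₗ[𝓞 k] LatA k 𝔟,
        ∀ x y : LatA k 𝔞, formA σ 𝔟 (φ x) (φ y) = formA σ 𝔞 x y) ↔
      ClassGroup.mk k 𝔞 = ClassGroup.mk k 𝔟 := by
  have : Algebra.IsQuadraticExtension ℚ k := { finrank_eq_two' := hk2 }
  have h𝔞 : ((𝔞 : FractionalIdeal (𝓞 k)⁰ k) : Submodule (𝓞 k) k) ≠ ⊥ :=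
    coeToSubmodule_ne_bot.mpr 𝔞.ne_zero
  rw [ClassGroup.mk_eq_mk_iff_exists_smul_eq]
  constructor
  · rintro ⟨φ, -⟩
    exact Submodule.exists_smul_eq_of_linearEquiv h𝔞 φ
  · rintro ⟨c, hc, h⟩
    exact ⟨_, formA_prodCongr_smulEquivOfEq σ hc h
      (Algebra.algebraMap_norm_eq_mul_of_isQuadraticExtension hσ c) (norm_pos_of_discr_neg him hc)⟩

theorem statement11
    (k : Type) [Field k] [NumberField k]
    (hk2 : Module.finrank ℚ k = 2) (him : NumberField.discr k < 0)
    (hodd : Odd (NumberField.discr k))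
    -- complex conjugation, i.e. the nontrivial automorphism of k
    (σ : k ≃ₐ[ℚ] k) (hσ : σ ≠ AlgEquiv.refl)
    (𝔞 𝔟 : (FractionalIdeal (𝓞 k)⁰ k)ˣ) :
    (∃ φ : LatA k 𝔞 ≃ₗ[𝓞 k] LatA k 𝔟,
        ∀ x y : LatA k 𝔞, formA σ 𝔟 (φ x) (φ y) = formA σ 𝔞 x y) ↔
      ClassGroup.mk k 𝔞 = ClassGroup.mk k 𝔟 :=
  statement11_general k hk2 him σ hσ 𝔞 𝔟
end

section
/- Let p be a prime number and let A ⊆ M₂(𝔽_p) be an 𝔽_p-subalgebra (containing the identity matrix) with dim_{𝔽_p} A = 3. Then there exists g ∈ GL₂(𝔽_p) such that g·A·g⁻¹ is the algebra of upper triangular matrices in M₂(𝔽_p). -/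
/-!
A 3-dimensional subalgebra `A` is a hyperplane of `M₂(K)`, hence the trace-orthogonal of a
nonzero `m`: `A = {x | tr (m x) = 0}`. As `1 ∈ A`, `tr m = 0`. As `A` is closed under
multiplication, `m a` is trace-orthogonal to `A`, i.e. `m a ∈ K m` for `a ∈ A`; if `m` were
invertible this would make `A` consist of scalars. So `det m = 0` too, whence `m² = 0`, and in
the basis `(m v, v)` (for any `v` with `m v ≠ 0`) the matrix `m` becomes `E₀₁`. Conjugating by
this change of basis turns `A` into `{x | tr (E₀₁ x) = 0} = {x | x₁₀ = 0}`.
-/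

open Matrix Module

theorem Submodule.exists_dual_ker_eq_of_finrank_add_one {K V : Type*} [Field K] [AddCommGroup V]
    [Module K V] [FiniteDimensional K V] (W : Submodule K V)
    (hW : finrank K W + 1 = finrank K V) :
    ∃ f : Dual K V, f ≠ 0 ∧ LinearMap.ker f = W := by
  have hW_lt : W < ⊤ := by
    refine lt_top_iff_ne_top.mpr fun h => ?_
    rw [h, finrank_top] at hW
    omega
  obtain ⟨f, hf, hWf⟩ := W.exists_dual_map_eq_bot_of_lt_top hW_lt inferInstance
  have hker : LinearMap.ker f ≠ ⊤ := by rwa [Ne, LinearMap.ker_eq_top]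
  refine ⟨f, hf, (Submodule.eq_of_le_of_finrank_le (LinearMap.le_ker_iff_map.mpr hWf) ?_).symm⟩
  have := Submodule.finrank_lt hker
  omega

namespace Matrix

variable {n K : Type*} [Fintype n] [DecidableEq n] [Field K]

variable (n K) in
def traceDual : Matrix n n K →ₗ[K] Dual K (Matrix n n K) :=
  (LinearMap.mul K (Matrix n n K)).compr₂ (traceLinearMap n K K)

@[simp]
theorem traceDual_apply (m x : Matrix n n K) : traceDual n K m x = trace (m * x) := rfl

theorem traceDual_injective : Function.Injective (traceDual n K) := fun m m' h =>
  ext_iff_trace_mul_right.mpr fun x => by simpa using DFunLike.congr_fun h x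

theorem traceDual_surjective : Function.Surjective (traceDual n K) :=
  (LinearMap.injective_iff_surjective_of_finrank_eq_finrank
    (Subspace.dual_finrank_eq).symm).mp traceDual_injective

theorem exists_trace_mul_iff_of_finrank_add_one (W : Submodule K (Matrix n n K))
    (hW : finrank K W + 1 = Fintype.card n ^ 2) :
    ∃ m : Matrix n n K, m ≠ 0 ∧ ∀ x, x ∈ W ↔ trace (m * x) = 0 := by
  obtain ⟨f, hf, hker⟩ := W.exists_dual_ker_eq_of_finrank_add_one
    (by rwa [finrank_matrix, finrank_self, mul_one, ← sq])
  obtain ⟨m, rfl⟩ := traceDual_surjective f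
  exact ⟨m, by rintro rfl; simp at hf, fun x => by simp [← hker]⟩

theorem exists_smul_eq_of_trace_mul_eq_zero_imp {m y : Matrix n n K}
    (h : ∀ x, trace (m * x) = 0 → trace (y * x) = 0) : ∃ c : K, c • m = y := by
  have hspan : traceDual n K y ∈ Submodule.span K (Set.range fun _ : Unit => traceDual n K m) :=
    mem_span_of_iInf_ker_le_ker fun x hx => by
      simpa using h x (by simpa using hx)
  rw [Set.range_const, Submodule.mem_span_singleton] at hspan
  obtain ⟨c, hc⟩ := hspan
  exact ⟨c, traceDual_injective (by simpa using hc)⟩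

theorem det_eq_zero_of_mem_subalgebra_iff {A : Subalgebra K (Matrix n n K)} (hA : A ≠ ⊥)
    {m : Matrix n n K} (hm : ∀ x, x ∈ A ↔ trace (m * x) = 0) : m.det = 0 := by
  by_contra hdet
  refine hA (eq_bot_iff.mpr fun a ha => ?_)
  obtain ⟨c, hc⟩ : ∃ c : K, c • m = m * a :=
    exists_smul_eq_of_trace_mul_eq_zero_imp fun x hx => by
      rw [Matrix.mul_assoc, ← hm]
      exact A.mul_mem ha ((hm x).mpr hx)
  have : a = algebraMap K _ c := by
    have hm_unit : IsUnit m := (isUnit_iff_isUnit_det m).mpr (isUnit_iff_ne_zero.mpr hdet)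
    refine hm_unit.mul_left_cancel ?_
    rw [← hc, Algebra.algebraMap_eq_smul_one, Matrix.mul_smul, Matrix.mul_one]
  exact this ▸ Subalgebra.algebraMap_mem ⊥ c

theorem image_conj_setOf_trace_mul_eq_zero (g : GL n K) (m : Matrix n n K) :
    (fun x => (g : Matrix n n K) * x * ((g⁻¹ : GL n K) : Matrix n n K)) ''
        {x | trace (m * x) = 0} =
      {y | trace ((g : Matrix n n K) * m * ((g⁻¹ : GL n K) : Matrix n n K) * y) = 0} := by
  rw [Set.image_eq_preimage_of_inverse (g := fun y => ((g⁻¹ : GL n K) : Matrix n n K) * y * g)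
    (fun x => by simp [Matrix.mul_assoc]) (fun y => by simp [Matrix.mul_assoc])]
  ext y
  change trace (m * (_ * y * _)) = 0 ↔ trace (_ * m * _ * y) = 0
  rw [← Matrix.mul_assoc, trace_mul_cycle, Matrix.mul_assoc, Matrix.mul_assoc, Matrix.mul_assoc]

theorem sq_eq_zero_of_trace_eq_zero_of_det_eq_zero {R : Type*} [CommRing R] [Nontrivial R]
    {m : Matrix (Fin 2) (Fin 2) R} (htr : m.trace = 0) (hdet : m.det = 0) : m ^ 2 = 0 := by
  simpa [charpoly_fin_two, htr, hdet] using aeval_self_charpoly m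

theorem exists_GL_mul_eq_mul_single_of_sq_eq_zero {m : Matrix (Fin 2) (Fin 2) K}
    (hm0 : m ≠ 0) (hm : m ^ 2 = 0) :
    ∃ P : GL (Fin 2) K,
      m * (P : Matrix (Fin 2) (Fin 2) K) = (P : Matrix (Fin 2) (Fin 2) K) * single 0 1 1 := by
  obtain ⟨v, hv⟩ : ∃ v, m *ᵥ v ≠ 0 := by
    by_contra! h
    exact hm0 (ext_iff_mulVec.mpr fun v => by simpa using h v)
  have hmmv : m *ᵥ (m *ᵥ v) = 0 := by rw [mulVec_mulVec, ← sq, hm, zero_mulVec]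
  set P : Matrix (Fin 2) (Fin 2) K := (of ![m *ᵥ v, v])ᵀ with hP
  have hPw : ∀ w, P *ᵥ w = w 0 • m *ᵥ v + w 1 • v := fun w => by
    ext i
    fin_cases i <;> simp [hP, mulVec_transpose, vecMul, dotProduct, Fin.sum_univ_two, mul_comm]
  have hdet : P.det ≠ 0 := by
    rw [Ne, ← exists_mulVec_eq_zero_iff]
    rintro ⟨w, hw0, hw⟩
    have h1 : w 1 = 0 := by
      have := congrArg (m *ᵥ ·) hw
      simp only [hPw, mulVec_add, mulVec_smul, hmmv, smul_zero, zero_add, mulVec_zero] at this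
      exact (smul_eq_zero.mp this).resolve_right hv
    have h0 : w 0 = 0 := by
      rw [hPw, h1, zero_smul, add_zero] at hw
      exact (smul_eq_zero.mp hw).resolve_right hv
    exact hw0 (funext fun i => by fin_cases i <;> assumption)
  refine ⟨GeneralLinearGroup.mkOfDetNeZero P hdet, ext_iff_mulVec.mpr fun w => ?_⟩
  change (m * P) *ᵥ w = (P * single 0 1 1) *ᵥ w
  rw [← mulVec_mulVec, ← mulVec_mulVec, hPw, hPw, mulVec_add, mulVec_smul, mulVec_smul, hmmv,
    single_mulVec]
  simp

end Matrix

theorem statement15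
    (p : ℕ) [Fact p.Prime]
    (A : Subalgebra (ZMod p) (Matrix (Fin 2) (Fin 2) (ZMod p)))
    (hA : Module.finrank (ZMod p) A = 3) :
    ∃ g : GL (Fin 2) (ZMod p),
      (fun x => (g : Matrix (Fin 2) (Fin 2) (ZMod p)) * x *
          ((g⁻¹ : GL (Fin 2) (ZMod p)) : Matrix (Fin 2) (Fin 2) (ZMod p))) '' (A : Set _) =
        {x : Matrix (Fin 2) (Fin 2) (ZMod p) | x 1 0 = 0} := by
  obtain ⟨m, hm0, hmA⟩ :=
    exists_trace_mul_iff_of_finrank_add_one (Subalgebra.toSubmodule A) (by simpa using hA)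
  have hA_ne_bot : A ≠ ⊥ := by rintro rfl; simp at hA
  have htr : m.trace = 0 := by simpa using (hmA 1).mp A.one_mem
  have hdet : m.det = 0 := det_eq_zero_of_mem_subalgebra_iff hA_ne_bot hmA
  obtain ⟨P, hP⟩ := exists_GL_mul_eq_mul_single_of_sq_eq_zero hm0
    (sq_eq_zero_of_trace_eq_zero_of_det_eq_zero htr hdet)
  have hconj : ((P⁻¹ : GL (Fin 2) (ZMod p)) : Matrix (Fin 2) (Fin 2) (ZMod p)) * m *
      (P : Matrix (Fin 2) (Fin 2) (ZMod p)) = single 0 1 1 := by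
    rw [Matrix.mul_assoc, hP, ← Matrix.mul_assoc, Units.inv_mul, Matrix.one_mul]
  refine ⟨P⁻¹, ?_⟩
  rw [show (A : Set _) = {x | trace (m * x) = 0} from Set.ext hmA,
    image_conj_setOf_trace_mul_eq_zero, inv_inv, hconj]
  ext y
  simp [trace_single_mul]
end

section
/- Let p be a prime number. No semisimple 𝔽_p-algebra of dimension 3 embeds as a unital 𝔽_p-subalgebra into M₂(𝔽_p); equivalently, every 3-dimensional unital 𝔽_p-subalgebra A ⊆ M₂(𝔽_p) has nonzero Jacobson radical. -/
/-!
The trace form `(x, y) ↦ tr (x y)` on `M₂(F)` is nondegenerate, so the orthogonal of a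
3-dimensional subalgebra `A` is a line `F z`. As `1 ∈ A`, `tr z = 0`, and `z A ⊆ F z`. If `z`
were invertible this would force `A ⊆ F`; hence `det z = 0` and `z² = 0` by Cayley–Hamilton.
Then `z` is orthogonal to `F z = A^⊥`, so `z ∈ A`, and `z y z ∈ F z² = 0` for `y ∈ A` puts `z` in
the Jacobson radical of `A`. A semisimple algebra has zero radical, so it is not isomorphic to
such an `A`.
-/

open Module Matrix LinearMap.BilinForm

theorem mem_jacobson_bot_of_forall_mul_mul_eq_zero {R : Type*} [Ring R] {z : R}
    (h : ∀ y, z * y * z = 0) : z ∈ Ideal.jacobson (⊥ : Ideal R) := by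
  refine Ideal.mem_jacobson_iff.2 fun y ↦ ?_
  have hu : IsUnit (y * z + 1) := IsNilpotent.isUnit_add_one
    ⟨2, by rw [pow_two, mul_assoc, ← mul_assoc z, h, mul_zero]⟩
  refine ⟨↑hu.unit⁻¹, ?_⟩
  rw [Ideal.mem_bot, mul_assoc, ← mul_add_one, hu.val_inv_mul, sub_self]

namespace Matrix

variable {n R : Type*} [Fintype n] [CommRing R]

def traceForm : LinearMap.BilinForm R (Matrix n n R) :=
  (LinearMap.mul R _).compr₂ (traceLinearMap n R R)

@[simp]
theorem traceForm_apply (x y : Matrix n n R) : traceForm x y = trace (x * y) := rfl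

theorem traceForm_nondegenerate :
    (traceForm : LinearMap.BilinForm R (Matrix n n R)).Nondegenerate :=
  ⟨fun x hx ↦ ext_iff_trace_mul_right.2 fun y ↦ by simpa using hx y,
    fun y hy ↦ ext_iff_trace_mul_left.2 fun x ↦ by simpa using hy x⟩

theorem traceForm_isRefl : (traceForm : LinearMap.BilinForm R (Matrix n n R)).IsRefl :=
  fun x y h ↦ by rwa [traceForm_apply, trace_mul_comm]

variable [DecidableEq n] {A : Subalgebra R (Matrix n n R)} {z : Matrix n n R}

theorem trace_eq_zero_of_mem_traceForm_orthogonal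
    (hz : z ∈ traceForm.orthogonal (Subalgebra.toSubmodule A)) : trace z = 0 := by
  simpa using (mem_orthogonal_iff.1 hz) 1 A.one_mem

theorem mul_mem_traceForm_orthogonal
    (hz : z ∈ traceForm.orthogonal (Subalgebra.toSubmodule A)) {a : Matrix n n R} (ha : a ∈ A) :
    z * a ∈ traceForm.orthogonal (Subalgebra.toSubmodule A) :=
  mem_orthogonal_iff.2 fun b hb ↦ by
    rw [traceForm_apply, ← Matrix.mul_assoc, trace_mul_cycle]
    exact (mem_orthogonal_iff.1 hz) (a * b) (A.mul_mem ha hb)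

theorem mul_self_eq_zero_of_trace_eq_zero_of_det_eq_zero [Nontrivial R]
    {z : Matrix (Fin 2) (Fin 2) R} (ht : trace z = 0) (hd : det z = 0) : z * z = 0 := by
  simpa [charpoly_fin_two, ht, hd, pow_two] using aeval_self_charpoly z

end Matrix

section

variable {F : Type*} [Field F]

theorem Subalgebra.exists_ne_zero_forall_mul_mul_eq_zero
    {A : Subalgebra F (Matrix (Fin 2) (Fin 2) F)} (hA : finrank F A = 3) :
    ∃ z ∈ A, z ≠ 0 ∧ ∀ y ∈ A, z * y * z = 0 := by
  set W := traceForm.orthogonal (Subalgebra.toSubmodule A)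
  have hW : finrank F W = 1 := by
    rw [finrank_orthogonal traceForm_nondegenerate, Subalgebra.finrank_toSubmodule, hA,
      finrank_matrix]
    simp
  obtain ⟨⟨z, hzW⟩, hz0, hspan⟩ := finrank_eq_one_iff'.1 hW
  replace hz0 : z ≠ 0 := fun h ↦ hz0 (Subtype.ext h)
  have hmul : ∀ a ∈ A, ∃ c : F, z * a = c • z := fun a ha ↦ by
    obtain ⟨c, hc⟩ := hspan ⟨_, mul_mem_traceForm_orthogonal hzW ha⟩
    exact ⟨c, (congrArg Subtype.val hc).symm⟩
  have hdet : det z = 0 := by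
    by_contra hdet
    have hunit : IsUnit z := (isUnit_iff_isUnit_det z).2 (Ne.isUnit hdet)
    have hbot : A ≤ ⊥ := fun a ha ↦ by
      obtain ⟨c, hc⟩ := hmul a ha
      refine Algebra.mem_bot.2 ⟨c, hunit.mul_left_cancel ?_⟩
      rw [hc, Algebra.algebraMap_eq_smul_one, mul_smul_comm, mul_one]
    have := Submodule.finrank_mono (Subalgebra.toSubmodule.monotone hbot)
    rw [Subalgebra.finrank_toSubmodule, Subalgebra.finrank_toSubmodule, hA,
      Subalgebra.finrank_bot] at this
    omega
  have hsq := mul_self_eq_zero_of_trace_eq_zero_of_det_eq_zero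
    (trace_eq_zero_of_mem_traceForm_orthogonal hzW) hdet
  have hzA : z ∈ A := by
    rw [← Subalgebra.mem_toSubmodule, ← orthogonal_orthogonal traceForm_nondegenerate
      traceForm_isRefl (Subalgebra.toSubmodule A)]
    refine mem_orthogonal_iff.2 fun w hw ↦ ?_
    obtain ⟨c, hc⟩ := hspan ⟨w, hw⟩
    rw [← show c • z = w from congrArg Subtype.val hc]
    simp [hsq]
  refine ⟨z, hzA, hz0, fun y hy ↦ ?_⟩
  obtain ⟨c, hc⟩ := hmul y hy
  rw [hc, smul_mul_assoc, hsq, smul_zero]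

theorem Subalgebra.jacobson_bot_ne_bot_of_finrank_eq_three
    {A : Subalgebra F (Matrix (Fin 2) (Fin 2) F)} (hA : finrank F A = 3) :
    Ideal.jacobson (⊥ : Ideal A) ≠ ⊥ := by
  obtain ⟨z, hzA, hz0, hz⟩ := A.exists_ne_zero_forall_mul_mul_eq_zero hA
  have hmem := mem_jacobson_bot_of_forall_mul_mul_eq_zero (z := (⟨z, hzA⟩ : A))
    fun y ↦ Subtype.ext (hz y y.2)
  intro h
  rw [h, Ideal.mem_bot] at hmem
  exact hz0 (congrArg Subtype.val hmem)

end

theorem statement16 (p : ℕ) [Fact p.Prime] :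
    -- no 3-dimensional semisimple 𝔽_p-algebra embeds into M₂(𝔽_p) ...
    (∀ (S : Type) [Ring S] [Algebra (ZMod p) S], IsSemisimpleRing S →
      Module.finrank (ZMod p) S = 3 →
      ∀ f : S →ₐ[ZMod p] Matrix (Fin 2) (Fin 2) (ZMod p), ¬ Function.Injective f) ∧
    -- ... equivalently, every 3-dimensional subalgebra has nonzero Jacobson radical
    (∀ A : Subalgebra (ZMod p) (Matrix (Fin 2) (Fin 2) (ZMod p)),
      Module.finrank (ZMod p) A = 3 → Ideal.jacobson (⊥ : Ideal A) ≠ ⊥) := by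
  refine ⟨fun S _ _ hS h3 f hf ↦ ?_, fun A ↦ Subalgebra.jacobson_bot_ne_bot_of_finrank_eq_three⟩
  let e : S ≃ₐ[ZMod p] f.range := AlgEquiv.ofInjective f hf
  have : IsSemisimpleRing f.range := e.toRingEquiv.isSemisimpleRing
  refine Subalgebra.jacobson_bot_ne_bot_of_finrank_eq_three (A := f.range) ?_ ?_
  · rw [← h3, e.toLinearEquiv.finrank_eq]
  · rw [Ideal.jacobson_bot, IsSemisimpleRing.jacobson_eq_bot]
end

section
/- Let p be a prime number and let R ⊆ M₂(ℤ_p) be a ℤ_p-subalgebra containing the identity such that the quotient M₂(ℤ_p)/R (as an abelian group) has exactly p elements. Then there exists g ∈ GL₂(ℤ_p) such that g·R·g⁻¹ = { (a b; pc d) : a, b, c, d ∈ ℤ_p }, the standard Eichler order of level p in M₂(ℚ_p). -/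
/-!
Since `M₂(ℤ_p) ⧸ R` has order `p`, it is killed by `p`, so `R` contains `p M₂(ℤ_p)` and is the
preimage of the kernel of a functional `φ` on `M₂(𝔽_p)` with `φ 1 = 0` and multiplicatively
closed kernel. Writing `φ x = tr (x M)`, closedness of `ker φ` forces `y M ∈ 𝔽_p M` for every
`y ∈ ker φ`, which is impossible for invertible `M`; together with `tr M = φ 1 = 0` this makes `M`
a nonzero square-zero matrix, hence conjugate to the elementary matrix `E₀₁`. Thus
`φ x = (h x h⁻¹)₁₀`, and any lift of `h` to `GL₂(ℤ_p)` conjugates `R` onto the Eichler order.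
-/

open Matrix

theorem LinearMap.apply_eq_mul_apply_of_ker_le {K E : Type*} [CommRing K] [AddCommGroup E]
    [Module K E] {f g : E →ₗ[K] K} (hfg : ker f ≤ ker g) {u : E} (hu : f u = 1) (x : E) :
    g x = f x * g u := by
  have : x - f x • u ∈ ker f := by simp [hu]
  simpa [sub_eq_zero] using hfg this

namespace Matrix

section Trace

variable {n K : Type*} [Fintype n] [DecidableEq n]

theorem exists_trace_mul_eq [CommSemiring K] (φ : Matrix n n K →ₗ[K] K) :
    ∃ M : Matrix n n K, ∀ x, trace (x * M) = φ x := by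
  refine ⟨of fun i j => φ (single j i 1), fun x => ?_⟩
  conv_rhs => rw [matrix_eq_sum_single x]
  simp only [trace, diag, mul_apply, of_apply, map_sum]
  refine Finset.sum_congr rfl fun i _ => Finset.sum_congr rfl fun j _ => ?_
  rw [← smul_eq_mul, ← map_smul, smul_single, smul_eq_mul, mul_one]

theorem eq_zero_of_forall_trace_mul_eq_zero [Semiring K] {z : Matrix n n K}
    (h : ∀ x, trace (x * z) = 0) : z = 0 :=
  ext fun i j => by simpa [trace_single_mul] using h (single j i 1)

end Trace

variable {K : Type*} [Field K]

theorem det_eq_zero_of_forall_mul_eq_smul (M : Matrix (Fin 2) (Fin 2) K)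
    (h : ∀ y, trace (y * M) = 0 → ∃ c : K, y * M = c • M) : M.det = 0 := by
  by_contra hM
  have hinv : M⁻¹ * M = 1 := nonsing_inv_mul M (isUnit_iff_ne_zero.mpr hM)
  obtain ⟨c, hc⟩ := h (single 0 1 1 * M⁻¹) (by simp [mul_assoc, hinv])
  rw [mul_assoc, hinv, mul_one] at hc
  have hc0 : c ≠ 0 := by
    rintro rfl
    simpa using congr($hc 0 1)
  have : M = c⁻¹ • single 0 1 1 := by rw [hc, smul_smul, inv_mul_cancel₀ hc0, one_smul]
  exact hM (by simp [this, det_fin_two])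

theorem mul_self_eq_zero_of_trace_eq_zero_of_det_eq_zero_s17 {M : Matrix (Fin 2) (Fin 2) K}
    (ht : M.trace = 0) (hd : M.det = 0) : M * M = 0 := by
  simpa [charpoly_fin_two, ht, hd, sq] using aeval_self_charpoly M

theorem exists_GL_eq_conj_single_of_mul_self_eq_zero {M : Matrix (Fin 2) (Fin 2) K}
    (hM : M * M = 0) (hM0 : M ≠ 0) :
    ∃ h : GL (Fin 2) K,
      M = ((h⁻¹ : GL (Fin 2) K) : Matrix (Fin 2) (Fin 2) K) * single 0 1 1 *
        (h : Matrix (Fin 2) (Fin 2) K) := by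
  obtain ⟨v, hv⟩ : ∃ v, M *ᵥ v ≠ 0 := by
    by_contra! hv
    exact hM0 (ext_of_mulVec_single fun j => (hv _).trans (zero_mulVec _).symm)
  set P : Matrix (Fin 2) (Fin 2) K := !![(M *ᵥ v) 0, v 0; (M *ᵥ v) 1, v 1]
  have hP : ∀ w, P *ᵥ w = w 0 • M *ᵥ v + w 1 • v := fun w => by
    ext i; fin_cases i <;> simp [P, mulVec, dotProduct, Fin.sum_univ_two, mul_comm (w _)]
  have hMMv : M *ᵥ (M *ᵥ v) = 0 := by rw [mulVec_mulVec, hM, zero_mulVec]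
  have hdet : P.det ≠ 0 := by
    rw [ne_eq, ← exists_mulVec_eq_zero_iff]
    rintro ⟨w, hw0, hw⟩
    have h1 : w 1 = 0 := by
      have := congr(M *ᵥ $hw)
      simp only [hP, mulVec_add, mulVec_smul, hMMv, smul_zero, zero_add, mulVec_zero] at this
      exact (smul_eq_zero.mp this).resolve_right hv
    have h0 : w 0 = 0 := by
      simp only [hP, h1, zero_smul, add_zero] at hw
      exact (smul_eq_zero.mp hw).resolve_right hv
    exact hw0 (by ext i; fin_cases i <;> simp [h0, h1])
  have hMP : M * P = P * single 0 1 1 := by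
    ext i j
    fin_cases j
    · simpa [P, mulVec, dotProduct, Fin.sum_univ_two, mul_apply] using congr_fun hMMv i
    · fin_cases i <;> simp [P, mulVec, dotProduct, Fin.sum_univ_two, mul_apply]
  refine ⟨(GeneralLinearGroup.mkOfDetNeZero P hdet)⁻¹, ?_⟩
  simp only [inv_inv, coe_units_inv]
  change M = P * single 0 1 1 * P⁻¹
  rw [← hMP, mul_assoc, mul_nonsing_inv _ (isUnit_iff_ne_zero.mpr hdet), mul_one]

theorem exists_GL_apply_eq_conj_one_zero (φ : Matrix (Fin 2) (Fin 2) K →ₗ[K] K) (h1 : φ 1 = 0)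
    (hφ : φ ≠ 0) (hmul : ∀ x y, φ x = 0 → φ y = 0 → φ (x * y) = 0) :
    ∃ h : GL (Fin 2) K, ∀ x, φ x = ((h : Matrix (Fin 2) (Fin 2) K) * x *
      ((h⁻¹ : GL (Fin 2) K) : Matrix (Fin 2) (Fin 2) K)) 1 0 := by
  obtain ⟨M, hM⟩ := exists_trace_mul_eq φ
  obtain ⟨u, hu⟩ : ∃ u, φ u = 1 := by
    obtain ⟨x, hx⟩ := DFunLike.ne_iff.mp hφ
    exact ⟨(φ x)⁻¹ • x, by simp [inv_mul_cancel₀ hx]⟩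
  have hM0 : M ≠ 0 := by
    rintro rfl
    simp [← hM] at hu
  -- For `y ∈ ker φ`, the functional `x ↦ φ (x * y)` vanishes on `ker φ`, so is a multiple of `φ`.
  have hmulM : ∀ y, trace (y * M) = 0 → ∃ c : K, y * M = c • M := by
    intro y hy
    rw [hM] at hy
    refine ⟨φ (u * y), sub_eq_zero.mp (eq_zero_of_forall_trace_mul_eq_zero fun x => ?_)⟩
    have := LinearMap.apply_eq_mul_apply_of_ker_le (g := φ.comp (LinearMap.mulRight K y))
      (fun z hz => hmul z y hz hy) hu x
    simp only [LinearMap.comp_apply, LinearMap.mulRight_apply] at this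
    rw [mul_sub, trace_sub, mul_smul_comm, trace_smul, ← mul_assoc, hM, hM, this, smul_eq_mul,
      mul_comm, sub_self]
  have htr : M.trace = 0 := by simpa [h1] using hM 1
  obtain ⟨h, rfl⟩ := exists_GL_eq_conj_single_of_mul_self_eq_zero
    (mul_self_eq_zero_of_trace_eq_zero_of_det_eq_zero_s17 htr
      (det_eq_zero_of_forall_mul_eq_smul M hmulM)) hM0
  refine ⟨h, fun x => ?_⟩
  rw [← hM, ← mul_assoc, ← mul_assoc, trace_mul_cycle, ← mul_assoc, trace_mul_single]
  simp

end Matrix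

theorem Submodule.exists_addMonoidHom_zmod_ker_eq {A M : Type*} [Ring A] [AddCommGroup M]
    [Module A M] {p : ℕ} [Fact p.Prime] (N : Submodule A M) (hN : Nat.card (M ⧸ N) = p) :
    ∃ ψ : M →+ ZMod p, Function.Surjective ψ ∧ ∀ x, ψ x = 0 ↔ x ∈ N := by
  have := isAddCyclic_of_prime_card hN
  let e : M ⧸ N ≃+ ZMod p := addEquivOfAddCyclicCardEq (hN.trans (Nat.card_zmod p).symm)
  refine ⟨e.toAddMonoidHom.comp N.mkQ.toAddMonoidHom, e.surjective.comp N.mkQ_surjective,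
    fun x => ?_⟩
  simp [Submodule.Quotient.mk_eq_zero]

theorem Function.Surjective.matrix_map {m n α β : Type*} {f : α → β}
    (hf : Function.Surjective f) : Function.Surjective fun A : Matrix m n α => A.map f :=
  fun B => ⟨B.map (Function.surjInv hf), by ext; simp [Function.surjInv_eq hf]⟩

theorem Matrix.GeneralLinearGroup.map_surjective {n R S : Type*} [Fintype n] [DecidableEq n]
    [CommRing R] [CommRing S] {f : R →+* S} [IsLocalHom f] (hf : Function.Surjective f) :
    Function.Surjective (GeneralLinearGroup.map (n := n) f) := by
  intro h
  obtain ⟨A, hA : A.map f = h⟩ := hf.matrix_map (h : Matrix n n S)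
  have hdet : IsUnit A.det := by
    refine isUnit_of_map_unit f _ ?_
    rw [RingHom.map_det, RingHom.mapMatrix_apply, hA]
    exact isUnits_det_units h
  refine ⟨((isUnit_iff_isUnit_det A).mpr hdet).unit, ?_⟩
  ext i j
  simp [← hA]

namespace PadicInt

variable {p : ℕ} [Fact p.Prime]

theorem toZMod_eq_zero_iff_dvd {x : ℤ_[p]} : toZMod x = 0 ↔ (p : ℤ_[p]) ∣ x := by
  rw [← RingHom.mem_ker, ker_toZMod, maximalIdeal_eq_span_p, Ideal.mem_span_singleton]

instance isLocalHom_toZMod : IsLocalHom (toZMod : ℤ_[p] →+* ZMod p) := by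
  rw [toZMod_eq_residueField_comp_residue]
  infer_instance

theorem exists_eq_smul_of_map_toZMod_eq_zero {m n : Type*} {x : Matrix m n ℤ_[p]}
    (hx : x.map toZMod = 0) : ∃ y, x = (p : ℤ_[p]) • y := by
  choose y hy using fun i j => toZMod_eq_zero_iff_dvd.mp congr($hx i j)
  exact ⟨Matrix.of y, by ext i j; simp [hy i j]⟩

theorem exists_linearMap_map_toZMod {m n G : Type*} [AddCommGroup G] [Module (ZMod p) G]
    (ψ : Matrix m n ℤ_[p] →+ G) :
    ∃ φ : Matrix m n (ZMod p) →ₗ[ZMod p] G, ∀ x, φ (x.map toZMod) = ψ x := by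
  let π : Matrix m n ℤ_[p] →+ Matrix m n (ZMod p) :=
    (toZMod : ℤ_[p] →+* ZMod p).toAddMonoidHom.mapMatrix
  have hπ := Function.rightInverse_surjInv
    ((ZMod.ringHom_surjective toZMod).matrix_map : Function.Surjective π)
  have hker : π.ker ≤ ψ.ker := fun x hx => by
    obtain ⟨y, rfl⟩ := exists_eq_smul_of_map_toZMod_eq_zero hx
    simp [AddMonoidHom.mem_ker, Nat.cast_smul_eq_nsmul, ZModModule.char_nsmul_eq_zero]
  exact ⟨(π.liftOfRightInverse _ hπ ⟨ψ, hker⟩).toZModLinearMap p,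
    π.liftOfRightInverse_comp_apply _ hπ ⟨ψ, hker⟩⟩

end PadicInt

theorem statement17
    (p : ℕ) [Fact p.Prime]
    (R : Subalgebra ℤ_[p] (Matrix (Fin 2) (Fin 2) ℤ_[p]))
    (hR : Nat.card
      ((Matrix (Fin 2) (Fin 2) ℤ_[p]) ⧸ (Subalgebra.toSubmodule R)) = p) :
    ∃ g : GL (Fin 2) ℤ_[p],
      (fun x => (g : Matrix (Fin 2) (Fin 2) ℤ_[p]) * x *
          ((g⁻¹ : GL (Fin 2) ℤ_[p]) : Matrix (Fin 2) (Fin 2) ℤ_[p])) '' (R : Set _) =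
        {x : Matrix (Fin 2) (Fin 2) ℤ_[p] | ∃ c : ℤ_[p], x 1 0 = (p : ℤ_[p]) * c} := by
  obtain ⟨ψ, hψ_surj, hψ⟩ := (Subalgebra.toSubmodule R).exists_addMonoidHom_zmod_ker_eq hR
  obtain ⟨φ, hφ⟩ := PadicInt.exists_linearMap_map_toZMod ψ
  have hφR : ∀ x, φ (x.map PadicInt.toZMod) = 0 ↔ x ∈ R := fun x => by rw [hφ]; exact hψ x
  have hsurj := ZMod.ringHom_surjective (PadicInt.toZMod : ℤ_[p] →+* ZMod p)
  obtain ⟨h, hh⟩ := exists_GL_apply_eq_conj_one_zero φ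
    (by simpa using (hφR 1).mpr R.one_mem)
    (fun h0 => by
      obtain ⟨z, hz⟩ := hψ_surj 1
      rw [← hφ, h0, LinearMap.zero_apply] at hz
      exact zero_ne_one hz)
    (fun x y hx hy => by
      obtain ⟨a, rfl⟩ := hsurj.matrix_map x
      obtain ⟨b, rfl⟩ := hsurj.matrix_map y
      rw [← Matrix.map_mul, hφR]
      exact R.mul_mem ((hφR a).mp hx) ((hφR b).mp hy))
  obtain ⟨g, rfl⟩ := Matrix.GeneralLinearGroup.map_surjective hsurj h
  have hconj : ∀ x, (∃ c, ((g : Matrix (Fin 2) (Fin 2) ℤ_[p]) * x *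
      ((g⁻¹ : GL (Fin 2) ℤ_[p]) : Matrix (Fin 2) (Fin 2) ℤ_[p])) 1 0 = (p : ℤ_[p]) * c) ↔
        x ∈ R := by
    intro x
    rw [← hφR, hh, ← dvd_def, ← PadicInt.toZMod_eq_zero_iff_dvd]
    change ((_ : Matrix (Fin 2) (Fin 2) ℤ_[p]).map PadicInt.toZMod) 1 0 = 0 ↔ _
    rw [Matrix.map_mul, Matrix.map_mul, ← map_inv]
    rfl
  refine ⟨g, ?_⟩
  rw [Set.image_eq_preimage_of_inverse (g := fun y => ((g⁻¹ : GL (Fin 2) ℤ_[p]) :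
    Matrix (Fin 2) (Fin 2) ℤ_[p]) * y * g) (fun x => by simp [mul_assoc])
    (fun y => by simp [mul_assoc])]
  ext y
  rw [Set.mem_preimage, SetLike.mem_coe, ← hconj]
  simp [mul_assoc]
end
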